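/- arXiv:1702.08168 — 9 statements merged into one kernel-verified Lean document; each statement's English description precedes it below -/
import Mathlib

section
/- Assume in addition that α,β ∈ ℤ with α < 0 < β. Then for every v ∈ V one has Σ_{e∈E₁, v−β/2 < e ≤ v+β/2} 𝓛₁(e) = Σ_{e∈E₂, v+α/2 < e ≤ v−α/2} 𝓛₂(e). -/
open Complex

noncomputable section
open scoped Classical

/-- The face lattice `F = ℤα + ℤβ ⊆ ℝ`. -/
def latF (α β : ℝ) : Set ℝ := {u | ∃ x y : ℤ, u = x * α + y * β}

/-- The vertex lattice `V = F + (α+β)/2`. -/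
def latV (α β : ℝ) : Set ℝ := {u | ∃ x y : ℤ, u = x * α + y * β + (α + β) / 2}

/-- The vertical edge lattice `E₁ = F + α/2`. -/
def latE1 (α β : ℝ) : Set ℝ := {u | ∃ x y : ℤ, u = x * α + y * β + α / 2}

/-- The horizontal edge lattice `E₂ = F + β/2`. -/
def latE2 (α β : ℝ) : Set ℝ := {u | ∃ x y : ℤ, u = x * α + y * β + β / 2}

/-- An `(m,n)`-periodic higher spin vertex configuration: a pair of finitely supported
multiplicity functions, supported on `E₁` resp. `E₂`, satisfying the current
conservation rule. -/
structure Config (α β : ℝ) (ℒ₁ ℒ₂ : ℝ → ℕ) : Prop where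
  supp1 : ∀ u : ℝ, ℒ₁ u ≠ 0 → u ∈ latE1 α β
  supp2 : ∀ u : ℝ, ℒ₂ u ≠ 0 → u ∈ latE2 α β
  fin1 : (Function.support ℒ₁).Finite
  fin2 : (Function.support ℒ₂).Finite
  conserv : ∀ v ∈ latV α β,
    ℒ₁ (v + β / 2) + ℒ₂ (v + α / 2) = ℒ₁ (v - β / 2) + ℒ₂ (v - α / 2)

/-! Since `α, β ∈ ℤ`, the face lattice `F` is `dℤ` with `d = gcd(α, β) > 0`, so the supports of
`ℒ₁` and `ℒ₂` each lie in a single coset of `dℤ`. Moving the vertex `v` up by `d` changes each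
window sum only at the two endpoints of its window, and current conservation at `v + d` says the
two changes agree. So whether the window sums agree is a `d`-periodic property on `V`, and it
holds for large `v`, where both windows lie beyond the finite supports. -/

open Set Function AddSubgroup

section IntervalSums

variable {M : Type*} [AddCommMonoid M] {L : ℝ → M}

lemma finsum_ite_Ioc (p q : ℝ) :
    (∑ᶠ e : ℝ, if p < e ∧ e ≤ q then L e else 0) = ∑ᶠ e ∈ Ioc p q, L e := by
  rw [finsum_mem_def]
  simp only [indicator_apply, mem_Ioc]

lemma finsum_mem_Ioc_consecutive (hL : (support L).Finite) {p q r : ℝ} (hpq : p ≤ q)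
    (hqr : q ≤ r) :
    ∑ᶠ e ∈ Ioc p r, L e = (∑ᶠ e ∈ Ioc p q, L e) + ∑ᶠ e ∈ Ioc q r, L e := by
  rw [← Ioc_union_Ioc_eq_Ioc hpq hqr]
  exact finsum_mem_union' (Ioc_disjoint_Ioc_of_le le_rfl) (hL.inter_of_right _)
    (hL.inter_of_right _)

lemma finsum_mem_Ioc_eq_zero_of_support_le {p : ℝ} (hp : ∀ e ∈ support L, e ≤ p) (q : ℝ) :
    ∑ᶠ e ∈ Ioc p q, L e = 0 :=
  finsum_mem_of_eqOn_zero fun e he => by_contra fun h => (hp e h).not_gt he.1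

lemma finsum_mem_Ioc_add_period {d t : ℝ} (hd : 0 < d)
    (hL : ∀ e ∈ support L, e - t ∈ zmultiples d) :
    ∑ᶠ e ∈ Ioc t (t + d), L e = L (t + d) := by
  rw [← finsum_mem_singleton (f := L) (a := t + d)]
  refine finsum_mem_inter_support_eq' L _ _ fun e he => ⟨fun hmem => ?_, ?_⟩
  · obtain ⟨k, hk⟩ := mem_zmultiples_iff.1 (hL e he)
    rw [zsmul_eq_mul] at hk
    have hk0 : (0 : ℝ) < k := by nlinarith [hmem.1]
    have hk1 : (k : ℝ) ≤ 1 := by nlinarith [hmem.2]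
    obtain rfl : k = 1 := by
      have : 0 < k := by exact_mod_cast hk0
      have : k ≤ 1 := by exact_mod_cast hk1
      omega
    rw [mem_singleton_iff]
    push_cast at hk
    linarith
  · rintro rfl
    exact ⟨by linarith, le_rfl⟩

lemma finsum_mem_Ioc_add_period_shift (hL : (support L).Finite) {d x y : ℝ} (hd : 0 < d)
    (hxy : x ≤ y) (hx : ∀ e ∈ support L, e - x ∈ zmultiples d)
    (hy : ∀ e ∈ support L, e - y ∈ zmultiples d) :
    (∑ᶠ e ∈ Ioc x y, L e) + L (y + d) = L (x + d) + ∑ᶠ e ∈ Ioc (x + d) (y + d), L e := by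
  rw [← finsum_mem_Ioc_add_period hd hy, ← finsum_mem_Ioc_add_period hd hx,
    ← finsum_mem_Ioc_consecutive hL hxy (by linarith),
    ← finsum_mem_Ioc_consecutive hL (by linarith) (by linarith)]

end IntervalSums

section Lattices

variable {α β u u' v f : ℝ}

lemma latF_intCast (a b : ℤ) :
    latF (a : ℝ) (b : ℝ) = (zmultiples ((a.gcd b : ℕ) : ℝ) : Set ℝ) := by
  ext u
  constructor
  · rintro ⟨x, y, rfl⟩
    obtain ⟨p, hp⟩ := Int.gcd_dvd_left a b
    obtain ⟨q, hq⟩ := Int.gcd_dvd_right a b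
    refine ⟨x * p + y * q, ?_⟩
    have hp' : (a : ℝ) = (a.gcd b : ℕ) * p := by exact_mod_cast hp
    have hq' : (b : ℝ) = (a.gcd b : ℕ) * q := by exact_mod_cast hq
    dsimp only
    rw [zsmul_eq_mul, hp', hq']
    push_cast
    ring
  · rintro ⟨k, rfl⟩
    refine ⟨k * a.gcdA b, k * a.gcdB b, ?_⟩
    have h : ((a.gcd b : ℕ) : ℝ) = a * a.gcdA b + b * a.gcdB b := by
      exact_mod_cast Int.gcd_eq_gcd_ab a b
    dsimp only
    rw [zsmul_eq_mul, h]
    push_cast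
    ring

lemma add_mem_latV (hv : v ∈ latV α β) (hf : f ∈ latF α β) : v + f ∈ latV α β := by
  obtain ⟨x, y, rfl⟩ := hv
  obtain ⟨x', y', rfl⟩ := hf
  exact ⟨x + x', y + y', by push_cast; ring⟩

lemma sub_mem_latF_of_mem_latE1 (hu : u ∈ latE1 α β) (hu' : u' ∈ latE1 α β) :
    u - u' ∈ latF α β := by
  obtain ⟨x, y, rfl⟩ := hu
  obtain ⟨x', y', rfl⟩ := hu'
  exact ⟨x - x', y - y', by push_cast; ring⟩

lemma sub_mem_latF_of_mem_latE2 (hu : u ∈ latE2 α β) (hu' : u' ∈ latE2 α β) :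
    u - u' ∈ latF α β := by
  obtain ⟨x, y, rfl⟩ := hu
  obtain ⟨x', y', rfl⟩ := hu'
  exact ⟨x - x', y - y', by push_cast; ring⟩

lemma add_half_mem_latE1 (hv : v ∈ latV α β) :
    v + β / 2 ∈ latE1 α β ∧ v - β / 2 ∈ latE1 α β := by
  obtain ⟨x, y, rfl⟩ := hv
  exact ⟨⟨x, y + 1, by push_cast; ring⟩, ⟨x, y, by ring⟩⟩

lemma add_half_mem_latE2 (hv : v ∈ latV α β) :
    v + α / 2 ∈ latE2 α β ∧ v - α / 2 ∈ latE2 α β := by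
  obtain ⟨x, y, rfl⟩ := hv
  exact ⟨⟨x + 1, y, by push_cast; ring⟩, ⟨x, y, by ring⟩⟩

end Lattices

lemma forall_mem_of_gt_of_step {S : Set ℝ} {P : ℝ → Prop} {d m : ℝ} (hd : 0 < d)
    (hS : ∀ w ∈ S, w + d ∈ S) (hstep : ∀ w ∈ S, P (w + d) → P w)
    (hlarge : ∀ w ∈ S, m < w → P w) : ∀ w ∈ S, P w := by
  suffices h : ∀ n : ℕ, ∀ w ∈ S, m < w + n * d → P w by
    intro w hw
    obtain ⟨n, hn⟩ := exists_nat_gt ((m - w) / d)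
    exact h n w hw (by rw [div_lt_iff₀ hd] at hn; linarith)
  intro n
  induction n with
  | zero => simpa using hlarge
  | succ n ih =>
    intro w hw hlt
    exact hstep w hw (ih (w + d) (hS w hw) (by push_cast at hlt; linarith))

namespace Config

variable {α β d : ℝ} {ℒ₁ ℒ₂ : ℝ → ℕ}

lemma finsum_mem_Ioc_eq_iff_add_period (hconf : Config α β ℒ₁ ℒ₂) (hd : 0 < d)
    (hF : latF α β = zmultiples d) (hα : α ≤ 0) (hβ : 0 ≤ β) {w : ℝ} (hw : w ∈ latV α β) :
    (∑ᶠ e ∈ Ioc (w - β / 2) (w + β / 2), ℒ₁ e) = ∑ᶠ e ∈ Ioc (w + α / 2) (w - α / 2), ℒ₂ e ↔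
      (∑ᶠ e ∈ Ioc (w + d - β / 2) (w + d + β / 2), ℒ₁ e) =
        ∑ᶠ e ∈ Ioc (w + d + α / 2) (w + d - α / 2), ℒ₂ e := by
  have coset₁ : ∀ u ∈ latE1 α β, ∀ e ∈ support ℒ₁, e - u ∈ zmultiples d := fun u hu e he => by
    simpa only [hF, SetLike.mem_coe] using sub_mem_latF_of_mem_latE1 (hconf.supp1 e he) hu
  have coset₂ : ∀ u ∈ latE2 α β, ∀ e ∈ support ℒ₂, e - u ∈ zmultiples d := fun u hu e he => by
    simpa only [hF, SetLike.mem_coe] using sub_mem_latF_of_mem_latE2 (hconf.supp2 e he) hu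
  have shift₁ := finsum_mem_Ioc_add_period_shift hconf.fin1 hd (by linarith)
    (coset₁ _ (add_half_mem_latE1 hw).2) (coset₁ _ (add_half_mem_latE1 hw).1)
  have shift₂ := finsum_mem_Ioc_add_period_shift hconf.fin2 hd (by linarith)
    (coset₂ _ (add_half_mem_latE2 hw).1) (coset₂ _ (add_half_mem_latE2 hw).2)
  have hconserv := hconf.conserv (w + d) (add_mem_latV hw (by simp [hF]))
  simp only [sub_add_eq_add_sub, add_right_comm w] at shift₁ shift₂
  omega

end Config

theorem stmt3_general (α β : ℝ)
    (ℒ₁ ℒ₂ : ℝ → ℕ) (hconf : Config α β ℒ₁ ℒ₂)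
    (a b : ℤ) (ha : α = (a : ℝ)) (hb : β = (b : ℝ)) (hα : α < 0) (hβ : 0 < β) :
    ∀ v ∈ latV α β,
      (∑ᶠ e : ℝ, if v - β / 2 < e ∧ e ≤ v + β / 2 then ℒ₁ e else 0) =
      (∑ᶠ e : ℝ, if v + α / 2 < e ∧ e ≤ v - α / 2 then ℒ₂ e else 0) := by
  subst ha hb
  have hd : (0 : ℝ) < (a.gcd b : ℕ) := by
    exact_mod_cast Int.gcd_pos_of_ne_zero_right a (by exact_mod_cast hβ.ne')
  have hF := latF_intCast a b
  obtain ⟨m₁, hm₁⟩ := hconf.fin1.bddAbove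
  obtain ⟨m₂, hm₂⟩ := hconf.fin2.bddAbove
  simp only [finsum_ite_Ioc]
  refine forall_mem_of_gt_of_step hd (fun w hw => add_mem_latV hw (by simp [hF]))
    (fun w hw => (hconf.finsum_mem_Ioc_eq_iff_add_period hd hF hα.le hβ.le hw).2)
    (m := max (m₁ + b / 2) (m₂ - a / 2)) (fun w _ hw => ?_)
  rw [max_lt_iff] at hw
  rw [finsum_mem_Ioc_eq_zero_of_support_le fun e he => (hm₁ he).trans (by linarith),
    finsum_mem_Ioc_eq_zero_of_support_le fun e he => (hm₂ he).trans (by linarith)]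

/-- If moreover `α, β ∈ ℤ` with `α < 0 < β`, then for every `v ∈ V`:
`Σ_{e∈E₁, v−β/2 < e ≤ v+β/2} ℒ₁(e) = Σ_{e∈E₂, v+α/2 < e ≤ v−α/2} ℒ₂(e)`. -/
theorem stmt3 (m n : ℕ) (hmn : Nat.Coprime m n) (α β : ℝ)
    (hαβ : (α, β) ≠ ((0 : ℝ), (0 : ℝ))) (hlin : (m : ℝ) * α + (n : ℝ) * β = 0)
    (ℒ₁ ℒ₂ : ℝ → ℕ) (hconf : Config α β ℒ₁ ℒ₂)
    (a b : ℤ) (ha : α = (a : ℝ)) (hb : β = (b : ℝ)) (hα : α < 0) (hβ : 0 < β) :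
    ∀ v ∈ latV α β,
      (∑ᶠ e : ℝ, if v - β / 2 < e ∧ e ≤ v + β / 2 then ℒ₁ e else 0) =
      (∑ᶠ e : ℝ, if v + α / 2 < e ∧ e ≤ v - α / 2 then ℒ₂ e else 0) :=
  stmt3_general α β ℒ₁ ℒ₂ hconf a b ha hb hα hβ
end
end

section
/- The pair (P₁,P₂) satisfies the Mazorchuk–Turowska equation as an identity of polynomial functions: P₁(u+β/2)·P₂(u+α/2) = P₁(u−β/2)·P₂(u−α/2) for all u ∈ ℂ. -/
open Complex

noncomputable section
open scoped Classical

/-- `Pᵢ(u) = ∏_{e} (u-e)^{ℒᵢ(e)}` as a function on `ℂ` (a finite product). -/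
def PfunC (ℒ : ℝ → ℕ) (u : ℂ) : ℂ := ∏ᶠ e : ℝ, (u - (e : ℂ)) ^ ℒ e

/-- `Pᵢ(u) = ∏_{e} (u-e)^{ℒᵢ(e)}` as a real-valued function on `ℝ`. -/
def PfunR (ℒ : ℝ → ℕ) (u : ℝ) : ℝ := ∏ᶠ e : ℝ, (u - e) ^ ℒ e

theorem PfunC_add_ofReal (ℒ : ℝ → ℕ) (u : ℂ) (c : ℝ) :
    PfunC ℒ (u + c) = ∏ᶠ e : ℝ, (u - e) ^ ℒ (e + c) := by
  rw [PfunC, ← finprod_comp_equiv (Equiv.addRight c)]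
  refine finprod_congr fun e => ?_
  simp only [Equiv.coe_addRight, ofReal_add]
  ring

theorem finite_mulSupport_pow_shift {ℒ : ℝ → ℕ} (h : (Function.support ℒ).Finite) (u : ℂ)
    (c : ℝ) : (Function.mulSupport fun e : ℝ => (u - e) ^ ℒ (e + c)).Finite := by
  refine (h.image (· - c)).subset fun e he => ⟨e + c, fun h0 => he ?_, add_sub_cancel_right e c⟩
  simp [h0]

theorem PfunC_add_mul_PfunC_add {ℒ₁ ℒ₂ : ℝ → ℕ} (h₁ : (Function.support ℒ₁).Finite)
    (h₂ : (Function.support ℒ₂).Finite) (u : ℂ) (a b : ℝ) :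
    PfunC ℒ₁ (u + a) * PfunC ℒ₂ (u + b) = ∏ᶠ e : ℝ, (u - e) ^ (ℒ₁ (e + a) + ℒ₂ (e + b)) := by
  rw [PfunC_add_ofReal, PfunC_add_ofReal, ← finprod_mul_distrib
    (finite_mulSupport_pow_shift h₁ u a) (finite_mulSupport_pow_shift h₂ u b)]
  simp only [pow_add]

namespace Config

variable {α β : ℝ} {ℒ₁ ℒ₂ : ℝ → ℕ}

theorem mem_latV_of_apply₁_ne_zero (hc : Config α β ℒ₁ ℒ₂) {e : ℝ} (he : ℒ₁ e ≠ 0) :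
    e - β / 2 ∈ latV α β ∧ e + β / 2 ∈ latV α β := by
  obtain ⟨x, y, rfl⟩ := hc.supp1 e he
  exact ⟨⟨x, y - 1, by push_cast; ring⟩, ⟨x, y, by ring⟩⟩

theorem mem_latV_of_apply₂_ne_zero (hc : Config α β ℒ₁ ℒ₂) {e : ℝ} (he : ℒ₂ e ≠ 0) :
    e - α / 2 ∈ latV α β ∧ e + α / 2 ∈ latV α β := by
  obtain ⟨x, y, rfl⟩ := hc.supp2 e he
  exact ⟨⟨x - 1, y, by push_cast; ring⟩, ⟨x, y, by ring⟩⟩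

/-- Off `V` all four edges around `v` lie outside `E₁ ∪ E₂`, so the rule holds trivially there. -/
theorem conserv_everywhere (hc : Config α β ℒ₁ ℒ₂) (v : ℝ) :
    ℒ₁ (v + β / 2) + ℒ₂ (v + α / 2) = ℒ₁ (v - β / 2) + ℒ₂ (v - α / 2) := by
  by_cases hv : v ∈ latV α β
  · exact hc.conserv v hv
  have h₁ : ℒ₁ (v + β / 2) = 0 := by_contra fun h => hv (by
    simpa using (hc.mem_latV_of_apply₁_ne_zero h).1)
  have h₂ : ℒ₂ (v + α / 2) = 0 := by_contra fun h => hv (by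
    simpa using (hc.mem_latV_of_apply₂_ne_zero h).1)
  have h₃ : ℒ₁ (v - β / 2) = 0 := by_contra fun h => hv (by
    simpa using (hc.mem_latV_of_apply₁_ne_zero h).2)
  have h₄ : ℒ₂ (v - α / 2) = 0 := by_contra fun h => hv (by
    simpa using (hc.mem_latV_of_apply₂_ne_zero h).2)
  rw [h₁, h₂, h₃, h₄]

end Config

theorem stmt4_general (α β : ℝ)
    (ℒ₁ ℒ₂ : ℝ → ℕ) (hconf : Config α β ℒ₁ ℒ₂) :
    ∀ u : ℂ,
      PfunC ℒ₁ (u + (β : ℂ) / 2) * PfunC ℒ₂ (u + (α : ℂ) / 2) =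
      PfunC ℒ₁ (u - (β : ℂ) / 2) * PfunC ℒ₂ (u - (α : ℂ) / 2) := by
  intro u
  have half_ofReal (c : ℝ) : (c : ℂ) / 2 = ((c / 2 : ℝ) : ℂ) := by push_cast; rfl
  rw [sub_eq_add_neg u, sub_eq_add_neg u, half_ofReal, half_ofReal, ← ofReal_neg, ← ofReal_neg,
    PfunC_add_mul_PfunC_add hconf.fin1 hconf.fin2, PfunC_add_mul_PfunC_add hconf.fin1 hconf.fin2]
  refine finprod_congr fun e => ?_
  rw [← sub_eq_add_neg, ← sub_eq_add_neg, hconf.conserv_everywhere e]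

/-- The pair `(P₁,P₂)` satisfies the Mazorchuk–Turowska equation:
`P₁(u+β/2)·P₂(u+α/2) = P₁(u−β/2)·P₂(u−α/2)` for all `u ∈ ℂ`. -/
theorem stmt4 (m n : ℕ) (hmn : Nat.Coprime m n) (α β : ℝ)
    (hαβ : (α, β) ≠ ((0 : ℝ), (0 : ℝ))) (hlin : (m : ℝ) * α + (n : ℝ) * β = 0)
    (ℒ₁ ℒ₂ : ℝ → ℕ) (hconf : Config α β ℒ₁ ℒ₂) :
    ∀ u : ℂ,
      PfunC ℒ₁ (u + (β : ℂ) / 2) * PfunC ℒ₂ (u + (α : ℂ) / 2) =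
      PfunC ℒ₁ (u - (β : ℂ) / 2) * PfunC ℒ₂ (u - (α : ℂ) / 2) :=
  stmt4_general α β ℒ₁ ℒ₂ hconf

end
end

section
/- There exists a pair of functions (q₁,q₂) with qᵢ: Eᵢ → ℂ such that (i) qᵢ(e)² = Pᵢ(e) for all e ∈ Eᵢ and i ∈ {1,2}, and (ii) (q₁,q₂) satisfies the Mazorchuk–Turowska equation: q₁(u+β/2)q₂(u+α/2) = q₁(u−β/2)q₂(u−α/2) for all u ∈ V. -/
open Complex

noncomputable section
open scoped Classical

/-!
Fix a square root `√·` on `ℂ` and put `qᵢ(e) = ∏_f √(e - f) ^ ℒᵢ(f)`, so that `qᵢ(e)² = Pᵢ(e)`.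
Reindexing by `w = f ∓ β/2` resp. `w = f ∓ α/2`, both sides of the Mazorchuk–Turowska equation at
`u` become `∏_w √(u - w) ^ k(w)`, with `k(w) = ℒ₁(w + β/2) + ℒ₂(w + α/2)` on the left and
`k(w) = ℒ₁(w - β/2) + ℒ₂(w - α/2)` on the right. These exponents agree by current conservation
at `w ∈ V`, and off `V` all four terms vanish because the `ℒᵢ` are supported on `Eᵢ`.
-/

open Function

lemma hasFiniteMulSupport_pow_of_finite_support {ι M : Type*} [Monoid M] (g : ι → M)
    {ℒ : ι → ℕ} (hℒ : (support ℒ).Finite) : HasFiniteMulSupport fun f ↦ g f ^ ℒ f :=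
  hℒ.subset fun f hf h0 ↦ hf (by simp only [h0, pow_zero])

def sqrtProd (ℒ : ℝ → ℕ) (e : ℝ) : ℂ :=
  ∏ᶠ f : ℝ, (((e - f : ℝ) : ℂ) ^ (2⁻¹ : ℂ)) ^ ℒ f

lemma sqrtProd_sq {ℒ : ℝ → ℕ} (hℒ : (support ℒ).Finite) (e : ℝ) :
    sqrtProd ℒ e ^ 2 = PfunR ℒ e := by
  have hcast : ((PfunR ℒ e : ℝ) : ℂ) = ∏ᶠ f : ℝ, ((e - f : ℝ) : ℂ) ^ ℒ f := by
    simpa [PfunR] using ofRealHom.toMonoidHom.map_finprod_of_injective ofReal_injective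
      fun f ↦ (e - f) ^ ℒ f
  rw [sqrtProd, finprod_pow (hasFiniteMulSupport_pow_of_finite_support _ hℒ), hcast]
  refine finprod_congr fun f ↦ ?_
  rw [← pow_mul, mul_comm, pow_mul, cpow_ofNat_inv_pow]

lemma sqrtProd_add (ℒ : ℝ → ℕ) (u c : ℝ) :
    sqrtProd ℒ (u + c) = ∏ᶠ w : ℝ, (((u - w : ℝ) : ℂ) ^ (2⁻¹ : ℂ)) ^ ℒ (w + c) := by
  rw [sqrtProd, ← finprod_comp (fun w : ℝ ↦ w + c) (Equiv.addRight c).bijective]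
  simp only [add_sub_add_right_eq_sub]

lemma sqrtProd_add_mul_sqrtProd_add {ℒ₁ ℒ₂ : ℝ → ℕ} (h₁ : (support ℒ₁).Finite)
    (h₂ : (support ℒ₂).Finite) (u a b : ℝ) :
    sqrtProd ℒ₁ (u + b) * sqrtProd ℒ₂ (u + a)
      = ∏ᶠ w : ℝ, (((u - w : ℝ) : ℂ) ^ (2⁻¹ : ℂ)) ^ (ℒ₁ (w + b) + ℒ₂ (w + a)) := by
  have h₁' : (support fun w ↦ ℒ₁ (w + b)).Finite := h₁.preimage (add_left_injective b).injOn
  have h₂' : (support fun w ↦ ℒ₂ (w + a)).Finite := h₂.preimage (add_left_injective a).injOn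
  simp only [sqrtProd_add, ← finprod_mul_distrib
    (hasFiniteMulSupport_pow_of_finite_support _ h₁')
    (hasFiniteMulSupport_pow_of_finite_support _ h₂'), pow_add]

namespace Config

variable {α β : ℝ} {ℒ₁ ℒ₂ : ℝ → ℕ}

lemma eq_zero_of_notMem_latV (hc : Config α β ℒ₁ ℒ₂) {w : ℝ} (hw : w ∉ latV α β) :
    ℒ₁ (w + β / 2) = 0 ∧ ℒ₁ (w - β / 2) = 0 ∧ ℒ₂ (w + α / 2) = 0 ∧ ℒ₂ (w - α / 2) = 0 := by
  refine ⟨?_, ?_, ?_, ?_⟩ <;> by_contra h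
  · obtain ⟨x, y, hxy⟩ := hc.supp1 _ h
    exact hw ⟨x, y - 1, by push_cast; linarith⟩
  · obtain ⟨x, y, hxy⟩ := hc.supp1 _ h
    exact hw ⟨x, y, by linarith⟩
  · obtain ⟨x, y, hxy⟩ := hc.supp2 _ h
    exact hw ⟨x - 1, y, by push_cast; linarith⟩
  · obtain ⟨x, y, hxy⟩ := hc.supp2 _ h
    exact hw ⟨x, y, by linarith⟩

lemma conserv_all (hc : Config α β ℒ₁ ℒ₂) (w : ℝ) :
    ℒ₁ (w + β / 2) + ℒ₂ (w + α / 2) = ℒ₁ (w - β / 2) + ℒ₂ (w - α / 2) := by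
  by_cases hw : w ∈ latV α β
  · exact hc.conserv w hw
  · obtain ⟨h₁, h₂, h₃, h₄⟩ := hc.eq_zero_of_notMem_latV hw
    rw [h₁, h₂, h₃, h₄]

end Config

theorem stmt5_general (α β : ℝ) (ℒ₁ ℒ₂ : ℝ → ℕ) (hconf : Config α β ℒ₁ ℒ₂) :
    ∃ q₁ q₂ : ℝ → ℂ,
      (∀ e ∈ latE1 α β, q₁ e ^ 2 = (PfunR ℒ₁ e : ℂ)) ∧
      (∀ e ∈ latE2 α β, q₂ e ^ 2 = (PfunR ℒ₂ e : ℂ)) ∧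
      (∀ u ∈ latV α β,
        q₁ (u + β / 2) * q₂ (u + α / 2) = q₁ (u - β / 2) * q₂ (u - α / 2)) := by
  refine ⟨sqrtProd ℒ₁, sqrtProd ℒ₂, fun e _ ↦ sqrtProd_sq hconf.fin1 e,
    fun e _ ↦ sqrtProd_sq hconf.fin2 e, fun u _ ↦ ?_⟩
  simp only [sub_eq_add_neg u, sqrtProd_add_mul_sqrtProd_add hconf.fin1 hconf.fin2]
  exact finprod_congr fun w ↦ by simp only [← sub_eq_add_neg, hconf.conserv_all]

/-- There is a pair of functions `(q₁,q₂)` with `qᵢ : Eᵢ → ℂ` such that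
(i) `qᵢ(e)² = Pᵢ(e)` for all `e ∈ Eᵢ`, and (ii) `(q₁,q₂)` satisfies the
Mazorchuk–Turowska equation on `V`. -/
theorem stmt5 (m n : ℕ) (hmn : Nat.Coprime m n) (α β : ℝ)
    (hαβ : (α, β) ≠ ((0 : ℝ), (0 : ℝ))) (hlin : (m : ℝ) * α + (n : ℝ) * β = 0)
    (ℒ₁ ℒ₂ : ℝ → ℕ) (hconf : Config α β ℒ₁ ℒ₂) :
    ∃ q₁ q₂ : ℝ → ℂ,
      (∀ e ∈ latE1 α β, q₁ e ^ 2 = (PfunR ℒ₁ e : ℂ)) ∧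
      (∀ e ∈ latE2 α β, q₂ e ^ 2 = (PfunR ℒ₂ e : ℂ)) ∧
      (∀ u ∈ latV α β,
        q₁ (u + β / 2) * q₂ (u + α / 2) = q₁ (u - β / 2) * q₂ (u - α / 2)) :=
  stmt5_general α β ℒ₁ ℒ₂ hconf
end
end

section
/- The functions qᵢ: Eᵢ → ℂ defined by qᵢ(e) = 𝐢^{lᵢ(e)}·|Pᵢ(e)|^{1/2} (where 𝐢² = −1) satisfy (i) qᵢ(e)² = Pᵢ(e) for all e ∈ Eᵢ, i ∈ {1,2}, and (ii) the Mazorchuk–Turowska equation q₁(u+β/2)q₂(u+α/2) = q₁(u−β/2)q₂(u−α/2) for all u ∈ V. -/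
/-!
Only the factors with `e > u` of `Pᵢ(u) = ∏ (u - e)^{ℒᵢ(e)}` are negative, so the sign of
`Pᵢ(u)` is `(-1)^{lᵢ(u)}` and `qᵢ(u)² = Pᵢ(u)`. Moreover `P`, `l` and hence `q` turn sums of
multiplicity functions into products (resp. sums) and commute with translations, so each side of
the Mazorchuk–Turowska equation is `q` at `u` of a single multiplicity function,
`v ↦ ℒ₁(v ± β/2) + ℒ₂(v ± α/2)`; current conservation says that these two functions coincide.
-/

open Complex

noncomputable section
open scoped Classical

/-- `lᵢ(u) = Σ_{e > u} ℒᵢ(e)`. -/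
def lfun (ℒ : ℝ → ℕ) (u : ℝ) : ℕ := ∑ᶠ e : ℝ, if u < e then ℒ e else 0

/-- The square root `qᵢ(e) = 𝐢^{lᵢ(e)}·|Pᵢ(e)|^{1/2}`. -/
def qfun (ℒ : ℝ → ℕ) (e : ℝ) : ℂ := Complex.I ^ lfun ℒ e * (Real.sqrt |PfunR ℒ e| : ℂ)

section Multiplicities

variable {ℒ ℒ' : ℝ → ℕ}

lemma hasFiniteSupport_ite_lt (h : ℒ.HasFiniteSupport) (u : ℝ) :
    (fun e => if u < e then ℒ e else 0).HasFiniteSupport :=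
  h.subset fun e he => by
    by_cases hue : u < e <;> simp_all

lemma PfunR_eq_prod (h : ℒ.HasFiniteSupport) (u : ℝ) :
    PfunR ℒ u = ∏ e ∈ h.toFinset, (u - e) ^ ℒ e :=
  finprod_eq_prod_of_mulSupport_subset _ fun e he =>
    (Set.Finite.mem_toFinset h).mpr fun h0 : ℒ e = 0 => he (by simp [h0])

lemma lfun_eq_sum (h : ℒ.HasFiniteSupport) (u : ℝ) :
    lfun ℒ u = ∑ e ∈ h.toFinset, if u < e then ℒ e else 0 :=
  finsum_eq_sum_of_support_subset _ fun e he =>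
    (Set.Finite.mem_toFinset h).mpr fun h0 : ℒ e = 0 => he (by simp [h0])

lemma PfunR_eq_neg_one_pow_lfun_mul_abs (h : ℒ.HasFiniteSupport) (u : ℝ) :
    PfunR ℒ u = (-1) ^ lfun ℒ u * |PfunR ℒ u| := by
  rw [PfunR_eq_prod h, lfun_eq_sum h, Finset.abs_prod, ← Finset.prod_pow_eq_pow_sum,
    ← Finset.prod_mul_distrib]
  refine Finset.prod_congr rfl fun e _ => ?_
  rw [abs_pow]
  split_ifs with hue
  · rw [abs_of_neg (sub_neg.mpr hue), ← mul_pow, neg_one_mul, neg_neg]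
  · rw [abs_of_nonneg (sub_nonneg.mpr (not_lt.mp hue)), pow_zero, one_mul]

lemma qfun_sq (h : ℒ.HasFiniteSupport) (u : ℝ) : qfun ℒ u ^ 2 = PfunR ℒ u := by
  have hI : (I ^ lfun ℒ u) ^ 2 = (-1) ^ lfun ℒ u := by
    rw [← pow_mul, mul_comm, pow_mul, I_sq]
  rw [qfun, mul_pow, hI, ← ofReal_pow, Real.sq_sqrt (abs_nonneg _)]
  conv_rhs => rw [PfunR_eq_neg_one_pow_lfun_mul_abs h]
  push_cast [ofReal_pow]
  ring

lemma PfunR_add (h : ℒ.HasFiniteSupport) (h' : ℒ'.HasFiniteSupport) (u : ℝ) :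
    PfunR (ℒ + ℒ') u = PfunR ℒ u * PfunR ℒ' u := by
  simp only [PfunR, Pi.add_apply, pow_add]
  exact finprod_mul_distrib (h.hasFiniteMulSupport_fun_pow _)
    (h'.hasFiniteMulSupport_fun_pow _)

lemma lfun_add (h : ℒ.HasFiniteSupport) (h' : ℒ'.HasFiniteSupport) (u : ℝ) :
    lfun (ℒ + ℒ') u = lfun ℒ u + lfun ℒ' u := by
  rw [lfun, lfun, lfun, ← finsum_add_distrib (hasFiniteSupport_ite_lt h u)
    (hasFiniteSupport_ite_lt h' u)]
  refine finsum_congr fun e => ?_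
  split_ifs <;> simp

lemma qfun_add (h : ℒ.HasFiniteSupport) (h' : ℒ'.HasFiniteSupport) (u : ℝ) :
    qfun (ℒ + ℒ') u = qfun ℒ u * qfun ℒ' u := by
  rw [qfun, qfun, qfun, lfun_add h h', PfunR_add h h', abs_mul,
    Real.sqrt_mul (abs_nonneg _), ofReal_mul, pow_add]
  ring

lemma PfunR_add_right (ℒ : ℝ → ℕ) (u c : ℝ) :
    PfunR ℒ (u + c) = PfunR (fun v => ℒ (v + c)) u :=
  (finprod_comp_equiv (Equiv.addRight c)).symm.trans
    (finprod_congr fun v => by simp only [Equiv.coe_addRight, add_sub_add_right_eq_sub])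

lemma lfun_add_right (ℒ : ℝ → ℕ) (u c : ℝ) :
    lfun ℒ (u + c) = lfun (fun v => ℒ (v + c)) u :=
  (finsum_comp_equiv (Equiv.addRight c)).symm.trans
    (finsum_congr fun v => by simp only [Equiv.coe_addRight, add_lt_add_iff_right])

lemma qfun_add_right (ℒ : ℝ → ℕ) (u c : ℝ) :
    qfun ℒ (u + c) = qfun (fun v => ℒ (v + c)) u := by
  rw [qfun, qfun, PfunR_add_right, lfun_add_right]

lemma qfun_add_right_mul_qfun_add_right (h : ℒ.HasFiniteSupport) (h' : ℒ'.HasFiniteSupport)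
    (u c d : ℝ) :
    qfun ℒ (u + c) * qfun ℒ' (u + d) = qfun (fun v => ℒ (v + c) + ℒ' (v + d)) u := by
  rw [qfun_add_right, qfun_add_right,
    ← qfun_add (h.fun_comp_of_injective (add_left_injective c))
      (h'.fun_comp_of_injective (add_left_injective d))]
  rfl

end Multiplicities

/-- Off `V` all four multiplicities vanish by the support conditions. -/
lemma Config.conserv_everywhere_s6 {α β : ℝ} {ℒ₁ ℒ₂ : ℝ → ℕ} (hconf : Config α β ℒ₁ ℒ₂) (v : ℝ) :
    ℒ₁ (v + β / 2) + ℒ₂ (v + α / 2) = ℒ₁ (v - β / 2) + ℒ₂ (v - α / 2) := by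
  by_cases hv : v ∈ latV α β
  · exact hconf.conserv v hv
  · have hβ_add : ℒ₁ (v + β / 2) = 0 := by
      by_contra h; obtain ⟨x, y, hxy⟩ := hconf.supp1 _ h
      exact hv ⟨x, y - 1, by push_cast; linarith⟩
    have hα_add : ℒ₂ (v + α / 2) = 0 := by
      by_contra h; obtain ⟨x, y, hxy⟩ := hconf.supp2 _ h
      exact hv ⟨x - 1, y, by push_cast; linarith⟩
    have hβ_sub : ℒ₁ (v - β / 2) = 0 := by
      by_contra h; obtain ⟨x, y, hxy⟩ := hconf.supp1 _ h
      exact hv ⟨x, y, by linarith⟩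
    have hα_sub : ℒ₂ (v - α / 2) = 0 := by
      by_contra h; obtain ⟨x, y, hxy⟩ := hconf.supp2 _ h
      exact hv ⟨x, y, by linarith⟩
    rw [hβ_add, hα_add, hβ_sub, hα_sub]

theorem stmt6_general (α β : ℝ)
    (ℒ₁ ℒ₂ : ℝ → ℕ) (hconf : Config α β ℒ₁ ℒ₂) :
    (∀ e ∈ latE1 α β, qfun ℒ₁ e ^ 2 = (PfunR ℒ₁ e : ℂ)) ∧
    (∀ e ∈ latE2 α β, qfun ℒ₂ e ^ 2 = (PfunR ℒ₂ e : ℂ)) ∧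
    (∀ u ∈ latV α β,
      qfun ℒ₁ (u + β / 2) * qfun ℒ₂ (u + α / 2) =
      qfun ℒ₁ (u - β / 2) * qfun ℒ₂ (u - α / 2)) := by
  refine ⟨fun e _ => qfun_sq hconf.fin1 e, fun e _ => qfun_sq hconf.fin2 e, fun u _ => ?_⟩
  simp only [sub_eq_add_neg u, qfun_add_right_mul_qfun_add_right hconf.fin1 hconf.fin2]
  congr 1
  funext v
  simpa only [sub_eq_add_neg] using hconf.conserv_everywhere_s6 v

/-- The explicit functions `qᵢ(e) = 𝐢^{lᵢ(e)}·|Pᵢ(e)|^{1/2}` satisfy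
(i) `qᵢ(e)² = Pᵢ(e)` for all `e ∈ Eᵢ`, and (ii) the Mazorchuk–Turowska equation on `V`. -/
theorem stmt6 (m n : ℕ) (hmn : Nat.Coprime m n) (α β : ℝ)
    (hαβ : (α, β) ≠ ((0 : ℝ), (0 : ℝ))) (hlin : (m : ℝ) * α + (n : ℝ) * β = 0)
    (ℒ₁ ℒ₂ : ℝ → ℕ) (hconf : Config α β ℒ₁ ℒ₂) :
    (∀ e ∈ latE1 α β, qfun ℒ₁ e ^ 2 = (PfunR ℒ₁ e : ℂ)) ∧
    (∀ e ∈ latE2 α β, qfun ℒ₂ e ^ 2 = (PfunR ℒ₂ e : ℂ)) ∧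
    (∀ u ∈ latV α β,
      qfun ℒ₁ (u + β / 2) * qfun ℒ₂ (u + α / 2) =
      qfun ℒ₁ (u - β / 2) * qfun ℒ₂ (u - α / 2)) :=
  stmt6_general α β ℒ₁ ℒ₂ hconf
end
end

section
/- Let (q₁,q₂), qᵢ: Eᵢ → ℂ, be any pair of functions satisfying the Mazorchuk–Turowska equation q₁(u+β/2)q₂(u+α/2) = q₁(u−β/2)q₂(u−α/2) for all u ∈ V. Define linear operators on the space of all functions f: ℤ² → ℂ by (X₁^± f)(x,y) = q₁(xα+yβ ∓ α/2)·f(x∓1, y) and (X₂^± f)(x,y) = q₂(xα+yβ ∓ β/2)·f(x, y∓1). Then X₁^+ ∘ X₂^− = X₂^− ∘ X₁^+ and X₁^− ∘ X₂^+ = X₂^+ ∘ X₁^−. -/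
open Complex

noncomputable section
open scoped Classical

/-- The difference operator `X̃₁^s` (`s = 1` for `+`, `s = -1` for `−`):
`(X̃₁^s f)(x,y) = q₁(xα+yβ − s·α/2)·f(x−s, y)`. -/
def opX1 (q : ℝ → ℂ) (α β : ℝ) (s : ℤ) (f : ℤ × ℤ → ℂ) : ℤ × ℤ → ℂ :=
  fun p => q (p.1 * α + p.2 * β - s * (α / 2)) * f (p.1 - s, p.2)

/-- The difference operator `X̃₂^s`:
`(X̃₂^s f)(x,y) = q₂(xα+yβ − s·β/2)·f(x, y−s)`. -/
def opX2 (q : ℝ → ℂ) (α β : ℝ) (s : ℤ) (f : ℤ × ℤ → ℂ) : ℤ × ℤ → ℂ :=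
  fun p => q (p.1 * α + p.2 * β - s * (β / 2)) * f (p.1, p.2 - s)

/-- The multiplication operator `(H̃ f)(x,y) = (xα+yβ)·f(x,y)`. -/
def opH (α β : ℝ) (f : ℤ × ℤ → ℂ) : ℤ × ℤ → ℂ :=
  fun p => ((p.1 * α + p.2 * β : ℝ) : ℂ) * f p

variable {α β : ℝ} {q₁ q₂ : ℝ → ℂ}

/-- The two routes from `(x, y)` to `(x - s, y + s)` go around the vertex
`xα + yβ + s(β - α)/2`, where the Mazorchuk–Turowska equation equates their weights. -/
theorem opX1_comp_opX2_neg_comm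
    (hq : ∀ u ∈ latV α β,
      q₁ (u + β / 2) * q₂ (u + α / 2) = q₁ (u - β / 2) * q₂ (u - α / 2))
    {s : ℤ} (hs : s = 1 ∨ s = -1) (f : ℤ × ℤ → ℂ) :
    opX1 q₁ α β s (opX2 q₂ α β (-s) f) = opX2 q₂ α β (-s) (opX1 q₁ α β s f) := by
  funext ⟨x, y⟩
  simp only [opX1, opX2, ← mul_assoc]
  congr 1
  rw [mul_comm (q₂ _)]
  rcases hs with rfl | rfl
  · have h := hq (x * α + y * β + (β - α) / 2) ⟨x - 1, y, by push_cast; ring⟩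
    convert h.symm using 3 <;> push_cast <;> ring
  · have h := hq (x * α + y * β + (α - β) / 2) ⟨x, y - 1, by push_cast; ring⟩
    convert h using 3 <;> push_cast <;> ring

theorem stmt10_general (α β : ℝ)
    (q₁ q₂ : ℝ → ℂ)
    (hq : ∀ u ∈ latV α β,
      q₁ (u + β / 2) * q₂ (u + α / 2) = q₁ (u - β / 2) * q₂ (u - α / 2)) :
    (∀ f : ℤ × ℤ → ℂ,
      opX1 q₁ α β 1 (opX2 q₂ α β (-1) f) = opX2 q₂ α β (-1) (opX1 q₁ α β 1 f)) ∧
    (∀ f : ℤ × ℤ → ℂ,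
      opX1 q₁ α β (-1) (opX2 q₂ α β 1 f) = opX2 q₂ α β 1 (opX1 q₁ α β (-1) f)) :=
  ⟨opX1_comp_opX2_neg_comm hq (Or.inl rfl),
    opX1_comp_opX2_neg_comm hq (Or.inr rfl)⟩

/-- If `(q₁,q₂)` satisfies the Mazorchuk–Turowska equation on `V`, then the difference
operators satisfy `X₁⁺∘X₂⁻ = X₂⁻∘X₁⁺` and `X₁⁻∘X₂⁺ = X₂⁺∘X₁⁻`. -/
theorem stmt10 (m n : ℕ) (hmn : Nat.Coprime m n) (α β : ℝ)
    (hαβ : (α, β) ≠ ((0 : ℝ), (0 : ℝ))) (hlin : (m : ℝ) * α + (n : ℝ) * β = 0)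
    (q₁ q₂ : ℝ → ℂ)
    (hq : ∀ u ∈ latV α β,
      q₁ (u + β / 2) * q₂ (u + α / 2) = q₁ (u - β / 2) * q₂ (u - α / 2)) :
    (∀ f : ℤ × ℤ → ℂ,
      opX1 q₁ α β 1 (opX2 q₂ α β (-1) f) = opX2 q₂ α β (-1) (opX1 q₁ α β 1 f)) ∧
    (∀ f : ℤ × ℤ → ℂ,
      opX1 q₁ α β (-1) (opX2 q₂ α β 1 f) = opX2 q₂ α β 1 (opX1 q₁ α β (-1) f)) :=
  stmt10_general α β q₁ q₂ hq

end
end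

section
/- The operators X̃₁^±, X̃₂^±, H̃ map Γ₀(L_ξ) into itself, and on Γ₀(L_ξ) they satisfy the defining relations of 𝒜̃(𝓛): (i) H̃∘X̃ᵢ^± − X̃ᵢ^±∘H̃ = ±αᵢ·X̃ᵢ^± for i = 1,2; (ii) (X̃ᵢ^± ∘ X̃ᵢ^∓ f)(x,y) = Pᵢ(xα+yβ ∓ αᵢ/2)·f(x,y) for all f ∈ Γ₀(L_ξ) and i = 1,2; (iii) X̃₁^+ ∘ X̃₂^− = X̃₂^− ∘ X̃₁^+ and X̃₁^− ∘ X̃₂^+ = X̃₂^+ ∘ X̃₁^−. -/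
open Complex

noncomputable section
open scoped Classical

/-- `Γ(L_ξ)`: the `ξ`-twisted `(m,n)`-periodic functions on `ℤ²`. -/
def GammaSet (m n : ℤ) (ξ : ℂ) : Set (ℤ × ℤ → ℂ) :=
  {f | ∀ x y : ℤ, f (x - m, y - n) = ξ * f (x, y)}

/-- `Γ₀(L_ξ)`: elements of `Γ(L_ξ)` supported on finitely many `ℤ·(m,n)`-cosets. -/
def Gamma0Set (m n : ℤ) (ξ : ℂ) : Set (ℤ × ℤ → ℂ) :=
  {f | f ∈ GammaSet m n ξ ∧
    ∃ S : Finset (ℤ × ℤ), ∀ p : ℤ × ℤ, f p ≠ 0 →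
      ∃ q ∈ S, ∃ k : ℤ, p = (q.1 + k * m, q.2 + k * n)}

/-!
All relations are pointwise identities on `ℤ²`. Relation (ii) is `q(u)² = P(u)`: the factors
`(u - e) ^ ℒ e` of `P(u)` with `e > u` carry the sign `(-1) ^ ℒ e`, and these exponents add up
to `l(u)`. Relation (iii) reduces to `q₁(v - β/2) q₂(v - α/2) = q₁(v + β/2) q₂(v + α/2)` for all
real `v`. Since `P` is multiplicative and `l` additive in the multiplicity, each side is `q` of
the single multiplicity `w ↦ ℒ₁(w ∓ β/2) + ℒ₂(w ∓ α/2)`, and current conservation (trivially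
true off `V`) says that these two multiplicities coincide. The operators preserve `Γ₀(L_ξ)`
because `mα + nβ = 0` makes their coefficients `(m, n)`-periodic.
-/

section Multiplicity

variable {ℒ ℒ' : ℝ → ℕ}

lemma neg_one_pow_lfun_mul_abs_PfunR (h : ℒ.HasFiniteSupport) (u : ℝ) :
    (-1) ^ lfun ℒ u * |PfunR ℒ u| = PfunR ℒ u := by
  rw [PfunR_eq_prod h, lfun_eq_sum h, Finset.abs_prod, ← Finset.prod_pow_eq_pow_sum,
    ← Finset.prod_mul_distrib]
  refine Finset.prod_congr rfl fun e _ => ?_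
  rw [abs_pow]
  split_ifs with hue
  · rw [abs_of_neg (sub_neg.mpr hue), ← mul_pow]
    ring
  · rw [abs_of_nonneg (sub_nonneg.mpr (not_lt.mp hue)), pow_zero, one_mul]

lemma qfun_mul_self (h : ℒ.HasFiniteSupport) (u : ℝ) :
    qfun ℒ u * qfun ℒ u = PfunR ℒ u := by
  have hI : Complex.I ^ lfun ℒ u * Complex.I ^ lfun ℒ u = ((-1 : ℝ) ^ lfun ℒ u : ℝ) := by
    rw [← mul_pow, Complex.I_mul_I]
    push_cast
    rfl
  have hsqrt : (√|PfunR ℒ u| : ℂ) * √|PfunR ℒ u| = (|PfunR ℒ u| : ℝ) := by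
    rw [← Complex.ofReal_mul, Real.mul_self_sqrt (abs_nonneg _)]
  calc qfun ℒ u * qfun ℒ u
      = (Complex.I ^ lfun ℒ u * Complex.I ^ lfun ℒ u) * ((√|PfunR ℒ u| : ℂ) * √|PfunR ℒ u|) := by
        unfold qfun; ring
    _ = PfunR ℒ u := by
        rw [hI, hsqrt, ← Complex.ofReal_mul, neg_one_pow_lfun_mul_abs_PfunR h]

lemma qfun_add_const (c u : ℝ) : qfun ℒ (u + c) = qfun (fun e => ℒ (e + c)) u := by
  have hP : PfunR ℒ (u + c) = PfunR (fun e => ℒ (e + c)) u := by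
    rw [PfunR, ← finprod_comp_equiv (Equiv.addRight c)]
    exact finprod_congr fun e => by simp
  have hl : lfun ℒ (u + c) = lfun (fun e => ℒ (e + c)) u := by
    rw [lfun, ← finsum_comp_equiv (Equiv.addRight c)]
    exact finsum_congr fun e => by simp
  rw [qfun, qfun, hP, hl]

lemma qfun_mul_qfun_eq_of_add_eq (h : ℒ.HasFiniteSupport) (h' : ℒ'.HasFiniteSupport)
    {a b c d : ℝ} (hcons : ∀ w, ℒ (w + a) + ℒ' (w + b) = ℒ (w + c) + ℒ' (w + d)) (u : ℝ) :
    qfun ℒ (u + a) * qfun ℒ' (u + b) = qfun ℒ (u + c) * qfun ℒ' (u + d) := by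
  have hshift : ∀ x, (fun e => ℒ (e + x)).HasFiniteSupport := fun x =>
    h.fun_comp_of_injective (add_left_injective x)
  have hshift' : ∀ x, (fun e => ℒ' (e + x)).HasFiniteSupport := fun x =>
    h'.fun_comp_of_injective (add_left_injective x)
  simp only [qfun_add_const, ← qfun_add (hshift _) (hshift' _)]
  exact congrArg (qfun · u) (funext hcons)

end Multiplicity

lemma Config.conserv_all_s11 {α β : ℝ} {ℒ₁ ℒ₂ : ℝ → ℕ} (hconf : Config α β ℒ₁ ℒ₂) (w : ℝ) :
    ℒ₁ (w - β / 2) + ℒ₂ (w - α / 2) = ℒ₁ (w + β / 2) + ℒ₂ (w + α / 2) := by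
  by_cases hv : w ∈ latV α β
  · exact (hconf.conserv w hv).symm
  · have h₁ : ∀ e, e = w - β / 2 ∨ e = w + β / 2 → ℒ₁ e = 0 := by
      rintro e he
      by_contra hne
      obtain ⟨x, y, rfl⟩ := hconf.supp1 e hne
      rcases he with h | h
      · exact hv ⟨x, y, by linarith⟩
      · exact hv ⟨x, y - 1, by push_cast; linarith⟩
    have h₂ : ∀ e, e = w - α / 2 ∨ e = w + α / 2 → ℒ₂ e = 0 := by
      rintro e he
      by_contra hne
      obtain ⟨x, y, rfl⟩ := hconf.supp2 e hne
      rcases he with h | h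
      · exact hv ⟨x, y, by linarith⟩
      · exact hv ⟨x - 1, y, by push_cast; linarith⟩
    rw [h₁ _ (.inl rfl), h₁ _ (.inr rfl), h₂ _ (.inl rfl), h₂ _ (.inr rfl)]

lemma Config.qfun_mul_qfun {α β : ℝ} {ℒ₁ ℒ₂ : ℝ → ℕ} (hconf : Config α β ℒ₁ ℒ₂) (v : ℝ) :
    qfun ℒ₁ (v - β / 2) * qfun ℒ₂ (v - α / 2) = qfun ℒ₁ (v + β / 2) * qfun ℒ₂ (v + α / 2) := by
  have hcons := hconf.conserv_all_s11
  simp only [sub_eq_add_neg] at hcons ⊢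
  exact qfun_mul_qfun_eq_of_add_eq hconf.fin1 hconf.fin2 hcons v

section Gamma0

variable {α β : ℝ}

lemma mem_Gamma0Set_of_eq_mul_comp_sub {m n : ℤ} {ξ : ℂ} {f g : ℤ × ℤ → ℂ}
    (hf : f ∈ Gamma0Set m n ξ) (c : ℤ × ℤ → ℂ) (hc : ∀ x y, c (x - m, y - n) = c (x, y))
    (d : ℤ × ℤ) (hg : ∀ p, g p = c p * f (p.1 - d.1, p.2 - d.2)) : g ∈ Gamma0Set m n ξ := by
  obtain ⟨hper, S, hS⟩ := hf
  refine ⟨fun x y => ?_, S.image (· + d), fun p hp => ?_⟩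
  · rw [hg, hg, hc, sub_right_comm x, sub_right_comm y, hper]
    ring
  · have hfp : f (p.1 - d.1, p.2 - d.2) ≠ 0 := fun h0 => hp (by rw [hg, h0, mul_zero])
    obtain ⟨q, hq, k, hk⟩ := hS _ hfp
    refine ⟨q + d, Finset.mem_image_of_mem _ hq, k, ?_⟩
    simp only [Prod.ext_iff, Prod.fst_add, Prod.snd_add] at hk ⊢
    omega

lemma cast_sub_mul_add_cast_sub_mul {m n : ℤ} (hlin : (m : ℝ) * α + n * β = 0) (x y : ℤ) :
    ((x - m : ℤ) : ℝ) * α + ((y - n : ℤ) : ℝ) * β = x * α + y * β := by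
  push_cast
  linear_combination -hlin

variable {m n : ℤ} {ξ : ℂ} {f : ℤ × ℤ → ℂ}

lemma opX1_mem_Gamma0Set (hlin : (m : ℝ) * α + n * β = 0) (q : ℝ → ℂ) (s : ℤ)
    (hf : f ∈ Gamma0Set m n ξ) : opX1 q α β s f ∈ Gamma0Set m n ξ :=
  mem_Gamma0Set_of_eq_mul_comp_sub hf (fun p => q (p.1 * α + p.2 * β - s * (α / 2)))
    (fun x y => by simp only [cast_sub_mul_add_cast_sub_mul hlin]) (s, 0) fun p => by simp [opX1]

lemma opX2_mem_Gamma0Set (hlin : (m : ℝ) * α + n * β = 0) (q : ℝ → ℂ) (s : ℤ)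
    (hf : f ∈ Gamma0Set m n ξ) : opX2 q α β s f ∈ Gamma0Set m n ξ :=
  mem_Gamma0Set_of_eq_mul_comp_sub hf (fun p => q (p.1 * α + p.2 * β - s * (β / 2)))
    (fun x y => by simp only [cast_sub_mul_add_cast_sub_mul hlin]) (0, s) fun p => by simp [opX2]

lemma opH_mem_Gamma0Set (hlin : (m : ℝ) * α + n * β = 0) (hf : f ∈ Gamma0Set m n ξ) :
    opH α β f ∈ Gamma0Set m n ξ :=
  mem_Gamma0Set_of_eq_mul_comp_sub hf (fun p => ((p.1 * α + p.2 * β : ℝ) : ℂ))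
    (fun x y => by simp only [cast_sub_mul_add_cast_sub_mul hlin]) 0 fun p => by simp [opH]

end Gamma0

section Relations

variable {α β : ℝ} (q q₁ q₂ : ℝ → ℂ) (s : ℤ) (f : ℤ × ℤ → ℂ) (p : ℤ × ℤ)

lemma opH_opX1_sub_opX1_opH :
    opH α β (opX1 q α β s f) p - opX1 q α β s (opH α β f) p = (s * α) * opX1 q α β s f p := by
  simp only [opH, opX1]
  push_cast
  ring

lemma opH_opX2_sub_opX2_opH :
    opH α β (opX2 q α β s f) p - opX2 q α β s (opH α β f) p = (s * β) * opX2 q α β s f p := by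
  simp only [opH, opX2]
  push_cast
  ring

lemma opX1_opX1_neg_apply :
    opX1 q α β s (opX1 q α β (-s) f) p =
      q (p.1 * α + p.2 * β - s * (α / 2)) * q (p.1 * α + p.2 * β - s * (α / 2)) * f p := by
  simp only [opX1, sub_neg_eq_add, sub_add_cancel, Int.cast_sub, Int.cast_neg]
  ring_nf

lemma opX2_opX2_neg_apply :
    opX2 q α β s (opX2 q α β (-s) f) p =
      q (p.1 * α + p.2 * β - s * (β / 2)) * q (p.1 * α + p.2 * β - s * (β / 2)) * f p := by
  simp only [opX2, sub_neg_eq_add, sub_add_cancel, Int.cast_sub, Int.cast_neg]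
  ring_nf

lemma opX1_opX2_neg_comm
    (hq : ∀ v, q₁ (v - s * (β / 2)) * q₂ (v - s * (α / 2)) =
      q₁ (v + s * (β / 2)) * q₂ (v + s * (α / 2))) :
    opX1 q₁ α β s (opX2 q₂ α β (-s) f) = opX2 q₂ α β (-s) (opX1 q₁ α β s f) := by
  funext p
  have key := hq (p.1 * α + p.2 * β + s * (β / 2) - s * (α / 2))
  simp only [opX1, opX2]
  generalize f (p.1 - s, p.2 - -s) = z
  push_cast at key ⊢
  ring_nf at key ⊢
  linear_combination z * key

end Relations

theorem stmt11_general (m n : ℕ) (α β : ℝ)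
    (hlin : (m : ℝ) * α + (n : ℝ) * β = 0)
    (ℒ₁ ℒ₂ : ℝ → ℕ) (hconf : Config α β ℒ₁ ℒ₂) (ξ : ℂ) :
    -- the operators preserve Γ₀(L_ξ)
    (∀ f ∈ Gamma0Set (m : ℤ) (n : ℤ) ξ, ∀ s : ℤ, s = 1 ∨ s = -1 →
      opX1 (qfun ℒ₁) α β s f ∈ Gamma0Set (m : ℤ) (n : ℤ) ξ ∧
      opX2 (qfun ℒ₂) α β s f ∈ Gamma0Set (m : ℤ) (n : ℤ) ξ) ∧
    (∀ f ∈ Gamma0Set (m : ℤ) (n : ℤ) ξ, opH α β f ∈ Gamma0Set (m : ℤ) (n : ℤ) ξ) ∧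
    -- (i) [H̃, X̃ᵢ^s] = s·αᵢ·X̃ᵢ^s on Γ₀(L_ξ)
    (∀ f ∈ Gamma0Set (m : ℤ) (n : ℤ) ξ, ∀ s : ℤ, s = 1 ∨ s = -1 → ∀ p : ℤ × ℤ,
      opH α β (opX1 (qfun ℒ₁) α β s f) p - opX1 (qfun ℒ₁) α β s (opH α β f) p =
        ((s : ℂ) * (α : ℂ)) * opX1 (qfun ℒ₁) α β s f p ∧
      opH α β (opX2 (qfun ℒ₂) α β s f) p - opX2 (qfun ℒ₂) α β s (opH α β f) p =
        ((s : ℂ) * (β : ℂ)) * opX2 (qfun ℒ₂) α β s f p) ∧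
    -- (ii) X̃ᵢ^s ∘ X̃ᵢ^{-s} = Pᵢ(xα+yβ − s·αᵢ/2) on Γ₀(L_ξ)
    (∀ f ∈ Gamma0Set (m : ℤ) (n : ℤ) ξ, ∀ s : ℤ, s = 1 ∨ s = -1 → ∀ p : ℤ × ℤ,
      opX1 (qfun ℒ₁) α β s (opX1 (qfun ℒ₁) α β (-s) f) p =
        (PfunR ℒ₁ (p.1 * α + p.2 * β - s * (α / 2)) : ℂ) * f p ∧
      opX2 (qfun ℒ₂) α β s (opX2 (qfun ℒ₂) α β (-s) f) p =
        (PfunR ℒ₂ (p.1 * α + p.2 * β - s * (β / 2)) : ℂ) * f p) ∧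
    -- (iii) X̃₁^± and X̃₂^∓ commute on Γ₀(L_ξ)
    (∀ f ∈ Gamma0Set (m : ℤ) (n : ℤ) ξ,
      opX1 (qfun ℒ₁) α β 1 (opX2 (qfun ℒ₂) α β (-1) f) =
        opX2 (qfun ℒ₂) α β (-1) (opX1 (qfun ℒ₁) α β 1 f) ∧
      opX1 (qfun ℒ₁) α β (-1) (opX2 (qfun ℒ₂) α β 1 f) =
        opX2 (qfun ℒ₂) α β 1 (opX1 (qfun ℒ₁) α β (-1) f)) := by
  have hlin' : ((m : ℤ) : ℝ) * α + ((n : ℤ) : ℝ) * β = 0 := mod_cast hlin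
  refine ⟨fun f hf s _ => ⟨opX1_mem_Gamma0Set hlin' _ s hf, opX2_mem_Gamma0Set hlin' _ s hf⟩,
    fun f hf => opH_mem_Gamma0Set hlin' hf,
    fun f _ s _ p => ⟨opH_opX1_sub_opX1_opH _ s f p, opH_opX2_sub_opX2_opH _ s f p⟩,
    fun f _ s _ p => ?_, fun f _ => ?_⟩
  · rw [opX1_opX1_neg_apply, opX2_opX2_neg_apply, qfun_mul_self hconf.fin1,
      qfun_mul_self hconf.fin2]
    exact ⟨rfl, rfl⟩
  · constructor
    · exact opX1_opX2_neg_comm _ _ 1 f (by simpa using hconf.qfun_mul_qfun)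
    · simpa using opX1_opX2_neg_comm _ _ (-1) f
        (by simpa [← sub_eq_add_neg] using fun v => (hconf.qfun_mul_qfun v).symm)

/-- The operators `X̃ᵢ^±, H̃` map `Γ₀(L_ξ)` into itself and satisfy on `Γ₀(L_ξ)` the
defining relations of `𝒜̃(𝓛)`: (i) `[H̃, X̃ᵢ^±] = ±αᵢ X̃ᵢ^±`; (ii)
`X̃ᵢ^± ∘ X̃ᵢ^∓ = Pᵢ(H̃ ∓ αᵢ/2)`; (iii) `[X̃₁^±, X̃₂^∓] = 0`. -/
theorem stmt11 (m n : ℕ) (hmn : Nat.Coprime m n) (α β : ℝ)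
    (hαβ : (α, β) ≠ ((0 : ℝ), (0 : ℝ))) (hlin : (m : ℝ) * α + (n : ℝ) * β = 0)
    (ℒ₁ ℒ₂ : ℝ → ℕ) (hconf : Config α β ℒ₁ ℒ₂) (ξ : ℂ) (hξ : ξ ≠ 0) :
    -- the operators preserve Γ₀(L_ξ)
    (∀ f ∈ Gamma0Set (m : ℤ) (n : ℤ) ξ, ∀ s : ℤ, s = 1 ∨ s = -1 →
      opX1 (qfun ℒ₁) α β s f ∈ Gamma0Set (m : ℤ) (n : ℤ) ξ ∧
      opX2 (qfun ℒ₂) α β s f ∈ Gamma0Set (m : ℤ) (n : ℤ) ξ) ∧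
    (∀ f ∈ Gamma0Set (m : ℤ) (n : ℤ) ξ, opH α β f ∈ Gamma0Set (m : ℤ) (n : ℤ) ξ) ∧
    -- (i) [H̃, X̃ᵢ^s] = s·αᵢ·X̃ᵢ^s on Γ₀(L_ξ)
    (∀ f ∈ Gamma0Set (m : ℤ) (n : ℤ) ξ, ∀ s : ℤ, s = 1 ∨ s = -1 → ∀ p : ℤ × ℤ,
      opH α β (opX1 (qfun ℒ₁) α β s f) p - opX1 (qfun ℒ₁) α β s (opH α β f) p =
        ((s : ℂ) * (α : ℂ)) * opX1 (qfun ℒ₁) α β s f p ∧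
      opH α β (opX2 (qfun ℒ₂) α β s f) p - opX2 (qfun ℒ₂) α β s (opH α β f) p =
        ((s : ℂ) * (β : ℂ)) * opX2 (qfun ℒ₂) α β s f p) ∧
    -- (ii) X̃ᵢ^s ∘ X̃ᵢ^{-s} = Pᵢ(xα+yβ − s·αᵢ/2) on Γ₀(L_ξ)
    (∀ f ∈ Gamma0Set (m : ℤ) (n : ℤ) ξ, ∀ s : ℤ, s = 1 ∨ s = -1 → ∀ p : ℤ × ℤ,
      opX1 (qfun ℒ₁) α β s (opX1 (qfun ℒ₁) α β (-s) f) p =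
        (PfunR ℒ₁ (p.1 * α + p.2 * β - s * (α / 2)) : ℂ) * f p ∧
      opX2 (qfun ℒ₂) α β s (opX2 (qfun ℒ₂) α β (-s) f) p =
        (PfunR ℒ₂ (p.1 * α + p.2 * β - s * (β / 2)) : ℂ) * f p) ∧
    -- (iii) X̃₁^± and X̃₂^∓ commute on Γ₀(L_ξ)
    (∀ f ∈ Gamma0Set (m : ℤ) (n : ℤ) ξ,
      opX1 (qfun ℒ₁) α β 1 (opX2 (qfun ℒ₂) α β (-1) f) =
        opX2 (qfun ℒ₂) α β (-1) (opX1 (qfun ℒ₁) α β 1 f) ∧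
      opX1 (qfun ℒ₁) α β (-1) (opX2 (qfun ℒ₂) α β 1 f) =
        opX2 (qfun ℒ₂) α β 1 (opX1 (qfun ℒ₁) α β (-1) f)) :=
  stmt11_general m n α β hlin ℒ₁ ℒ₂ hconf ξ

end
end

section
/- There exists a unique function w: F → {1, −1} such that w(0) = 1 and, for all λ ∈ F, w(λ+α) = (−1)^{l₁(λ+α/2)}·w(λ) and w(λ+β) = (−1)^{l₂(λ+β/2)}·w(λ). -/
open Complex

noncomputable section
open scoped Classical

/-!
Write `F = ℤγ` with `γ > 0`, `α = nγ` and `β = -mγ` (after exchanging the two directions if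
necessary). Then `l₁`, `l₂` along the lattice are tail sums `A k`, `B k` of finitely supported
sequences, and current conservation yields the exact flux balance
`A k + B k = A (k - m) + B (k + n)`: the difference of the two sides is invariant under `k ↦ k + 1`
and vanishes far out. A parity potential `W` is built from `+∞`, where all tails vanish, along the
step `α - β = (n + m)γ`; the flux balance makes the defect of the `α`-relation `(n + m)`-periodic,
and it vanishes far out, so it vanishes identically. Then `w = (-1) ^ (W - W 0)` on `F`.
Uniqueness: `w' * w` is invariant under the steps `±α`, `±β`, hence constant on `F`.
-/

open Filter

lemma Nat.Coprime.add_pos {m n : ℕ} (h : m.Coprime n) : 0 < m + n := by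
  by_contra h0
  obtain ⟨rfl, rfl⟩ : m = 0 ∧ n = 0 := by omega
  exact Nat.not_coprime_zero_zero h

lemma Nat.ModEq.neg_one_pow {R : Type*} [Ring R] {a b : ℕ} (h : a ≡ b [MOD 2]) :
    (-1 : R) ^ a = (-1) ^ b := by
  rw [neg_one_pow_eq_pow_mod_two, h, ← neg_one_pow_eq_pow_mod_two]

lemma Int.iff_zero_of_forall_succ_iff {g : ℤ → Prop} (h : ∀ i, g (i + 1) ↔ g i) (i : ℤ) :
    g i ↔ g 0 := by
  induction i using Int.induction_on with
  | zero => rfl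
  | succ i ih => exact (h i).trans ih
  | pred i ih => exact (h (-i - 1)).symm.trans (by rwa [sub_add_cancel])

lemma Function.Periodic.eq_of_eventually_eq {α : Type*} {f : ℤ → α} {s : ℕ} (hs : 0 < s)
    (hf : Function.Periodic f s) {c : α} (hc : ∀ᶠ k in atTop, f k = c) (k : ℤ) : f k = c := by
  obtain ⟨N, hN⟩ := eventually_atTop.1 hc
  rw [← hf.nat_mul (N - k).natAbs k]
  have hs' : (1 : ℤ) ≤ s := by exact_mod_cast hs
  exact hN _ (by push_cast; nlinarith [le_abs_self (N - k), abs_nonneg (N - k)])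

lemma Filter.Eventually.comp_add_const {p : ℤ → Prop} (h : ∀ᶠ k in atTop, p k) (c : ℤ) :
    ∀ᶠ k in atTop, p (k + c) :=
  (tendsto_atTop_add_const_right _ c tendsto_id).eventually h

lemma lfun_eq_add_lfun {ℒ : ℝ → ℕ} (hfin : (Function.support ℒ).Finite) {u v : ℝ}
    (huv : u < v) (hgap : ∀ e, u < e → e < v → ℒ e = 0) :
    lfun ℒ u = ℒ v + lfun ℒ v := by
  have hsplit : (fun e => if u < e then ℒ e else 0) =
      fun e => (if e = v then ℒ e else 0) + (if v < e then ℒ e else 0) := by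
    funext e
    rcases lt_trichotomy e v with h | rfl | h
    · by_cases hu : u < e
      · simp [hu, h.ne, h.not_gt, hgap e hu h]
      · simp [hu, h.ne, h.not_gt]
    · simp [huv]
    · simp [huv.trans h, h, h.ne']
  unfold lfun
  rw [hsplit, finsum_add_distrib (hfin.subset fun e he => by aesop)
    (hfin.subset fun e he => by aesop), finsum_eq_single _ v (fun e he => if_neg he), if_pos rfl]

lemma eventually_lfun_eq_zero {ℒ : ℝ → ℕ} (hfin : (Function.support ℒ).Finite) :
    ∀ᶠ u in atTop, lfun ℒ u = 0 := by
  obtain ⟨M, hM⟩ := hfin.bddAbove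
  filter_upwards [eventually_ge_atTop M] with u hu
  refine finsum_eq_zero_of_forall_eq_zero fun e => ?_
  split_ifs with hue
  · by_contra hne
    exact (hue.trans_le' hu).not_ge (hM hne)
  · rfl

lemma lfun_intCast_mul_add {ℒ : ℝ → ℕ} (hfin : (Function.support ℒ).Finite) {γ c : ℝ}
    (hγ : 0 < γ) (hsupp : ∀ e, ℒ e ≠ 0 → ∃ j : ℤ, e = j * γ + c) (k : ℤ) :
    lfun ℒ (k * γ + c) = ℒ ((k + 1 : ℤ) * γ + c) + lfun ℒ ((k + 1 : ℤ) * γ + c) := by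
  refine lfun_eq_add_lfun hfin (by push_cast; linarith) fun e hke hek => ?_
  by_contra he
  obtain ⟨j, rfl⟩ := hsupp e he
  have hkj : (k : ℝ) < j := lt_of_mul_lt_mul_right (by linarith) hγ.le
  have hjk : (j : ℝ) < (k + 1 : ℤ) := lt_of_mul_lt_mul_right (by linarith) hγ.le
  norm_cast at hkj hjk
  omega

lemma eventually_lfun_intCast_mul_add_eq_zero {ℒ : ℝ → ℕ} (hfin : (Function.support ℒ).Finite)
    {γ : ℝ} (hγ : 0 < γ) (c : ℝ) : ∀ᶠ k : ℤ in atTop, lfun ℒ (k * γ + c) = 0 :=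
  (tendsto_atTop_add_const_right _ c
    (tendsto_intCast_atTop_atTop.atTop_mul_const hγ)).eventually (eventually_lfun_eq_zero hfin)

section Sequences

variable {m n : ℕ} {A B : ℤ → ℕ}

lemma add_eq_add_of_conservation {a b : ℤ → ℕ} (hA : ∀ k, A k = a (k + 1) + A (k + 1))
    (hB : ∀ k, B k = b (k + 1) + B (k + 1)) (hab : ∀ r, a (r - m) + b (r + n) = a r + b r)
    (hA0 : ∀ᶠ k in atTop, A k = 0) (hB0 : ∀ᶠ k in atTop, B k = 0) (k : ℤ) :
    A k + B k = A (k - m) + B (k + n) := by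
  let D : ℤ → ℤ := fun k => A k + B k - A (k - m) - B (k + n)
  have hD : Function.Periodic D (1 : ℕ) := by
    intro k
    have h1 := hA (k - m)
    have h2 := hB (k + n)
    have h3 := hab (k + 1)
    simp only [D, hA k, hB k, Nat.cast_one]
    ring_nf at h1 h2 h3 ⊢
    omega
  have hD0 : ∀ᶠ k in atTop, D k = 0 := by
    filter_upwards [hA0, hB0, hA0.comp_add_const (-m), hB0.comp_add_const n] with k h1 h2 h3 h4
    simp only [← sub_eq_add_neg] at h3
    simp [D, h1, h2, h3, h4]
  have := hD.eq_of_eventually_eq one_pos hD0 k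
  simp only [D] at this
  omega

lemma exists_eq_add_shift (C : ℤ → ℕ) {s : ℕ} (hs : 0 < s) (hC : ∀ᶠ k in atTop, C k = 0) :
    ∃ W : ℤ → ℕ, (∀ k, W k = C k + W (k + s)) ∧ ∀ᶠ k in atTop, W k = 0 := by
  obtain ⟨N, hN⟩ := eventually_atTop.1 hC
  have hs' : (1 : ℤ) ≤ s := by exact_mod_cast hs
  have hvanish : ∀ k : ℤ, ∀ i ≥ (N - k).toNat, C (k + i * s) = 0 := fun k i hi =>
    hN _ (by zify at hi; nlinarith [Int.self_le_toNat (N - k)])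
  refine ⟨fun k => ∑ i ∈ Finset.range (N - k).toNat, C (k + i * s), fun k => ?_, ?_⟩
  · dsimp only
    rw [← Finset.eventually_constant_sum (hvanish k) (Nat.le_succ _), Finset.sum_range_succ',
      ← Finset.eventually_constant_sum (hvanish (k + s)) (n := (N - k).toNat) (by omega)]
    simp only [Nat.cast_add, Nat.cast_one, Nat.cast_zero, zero_mul, add_zero, add_one_mul]
    rw [add_comm]
    congr 1
    exact Finset.sum_congr rfl fun i _ => congrArg C (by ring)
  · filter_upwards [eventually_ge_atTop N] with k hk
    simp [Int.toNat_eq_zero.2 (sub_nonpos.2 hk)]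

lemma exists_parity_potential (hs : 0 < n + m) (hflux : ∀ k, A k + B k = A (k - m) + B (k + n))
    (hA0 : ∀ᶠ k in atTop, A k = 0) (hB0 : ∀ᶠ k in atTop, B k = 0) :
    ∃ W : ℤ → ℕ, ∀ k, W (k + n) ≡ W k + A k [MOD 2] ∧ W (k - m) ≡ W k + B k [MOD 2] := by
  obtain ⟨W, hW, hW0⟩ := exists_eq_add_shift (fun k => A k + B (k + (n + m : ℕ))) hs
    (by filter_upwards [hA0, hB0.comp_add_const (n + m : ℕ)] with k h1 h2; simp only [h1, h2])
  let Δ : ℤ → ℕ := fun k => (W (k + n) + W k + A k) % 2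
  have hΔ : Function.Periodic Δ (n + m : ℕ) := by
    intro k
    have h1 := hW (k + n)
    have h2 := hW k
    have h3 := hflux (k + (n + m : ℕ))
    simp only [Δ]
    push_cast at h1 h2 h3 ⊢
    ring_nf at h1 h2 h3 ⊢
    omega
  have hα : ∀ k, W (k + n) ≡ W k + A k [MOD 2] := by
    intro k
    have := hΔ.eq_of_eventually_eq hs (c := 0)
      (by filter_upwards [hW0.comp_add_const n, hW0, hA0] with k h1 h2 h3; simp [Δ, h1, h2, h3]) k
    simp only [Δ] at this
    unfold Nat.ModEq
    omega
  refine ⟨W, fun k => ⟨hα k, ?_⟩⟩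
  have h1 := hα (k - m - n)
  have h2 := hW (k - m - n)
  push_cast at h1 h2
  ring_nf at h1 h2 ⊢
  unfold Nat.ModEq at *
  omega

end Sequences

def IsSignWeight (α β : ℝ) (ℒ₁ ℒ₂ : ℝ → ℕ) (w : ℝ → ℝ) : Prop :=
  (∀ lam ∈ latF α β, w lam = 1 ∨ w lam = -1) ∧ w 0 = 1 ∧
    (∀ lam ∈ latF α β,
      w (lam + α) = (-1 : ℝ) ^ lfun ℒ₁ (lam + α / 2) * w lam ∧
      w (lam + β) = (-1 : ℝ) ^ lfun ℒ₂ (lam + β / 2) * w lam)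

section Lattice

variable {α β : ℝ} {ℒ₁ ℒ₂ : ℝ → ℕ}

lemma latF_comm (α β : ℝ) : latF α β = latF β α := by
  ext u
  constructor <;> rintro ⟨x, y, rfl⟩ <;> exact ⟨y, x, by ring⟩

lemma latF_induction {P : ℝ → Prop} (h0 : P 0) (hα : ∀ lam ∈ latF α β, P (lam + α) ↔ P lam)
    (hβ : ∀ lam ∈ latF α β, P (lam + β) ↔ P lam) : ∀ lam ∈ latF α β, P lam := by
  rintro _ ⟨x, y, rfl⟩
  have hx := Int.iff_zero_of_forall_succ_iff (g := fun x : ℤ => P (x * α + y * β))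
    (fun i => by simpa [add_mul, add_right_comm] using hα _ ⟨i, y, rfl⟩) x
  have hy := Int.iff_zero_of_forall_succ_iff (g := fun y : ℤ => P (y * β))
    (fun i => by simpa [add_mul] using hβ _ ⟨0, i, by simp⟩) y
  simp only [Int.cast_zero, zero_mul, zero_add] at hx hy
  exact hx.2 (hy.2 h0)

lemma Config.symm (h : Config α β ℒ₁ ℒ₂) : Config β α ℒ₂ ℒ₁ where
  supp1 u hu := by obtain ⟨x, y, rfl⟩ := h.supp2 u hu; exact ⟨y, x, by ring⟩
  supp2 u hu := by obtain ⟨x, y, rfl⟩ := h.supp1 u hu; exact ⟨y, x, by ring⟩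
  fin1 := h.fin2
  fin2 := h.fin1
  conserv v hv := by
    have := h.conserv v (by obtain ⟨x, y, rfl⟩ := hv; exact ⟨y, x, by ring⟩)
    omega

lemma IsSignWeight.symm {w : ℝ → ℝ} (hw : IsSignWeight β α ℒ₂ ℒ₁ w) :
    IsSignWeight α β ℒ₁ ℒ₂ w := by
  rw [IsSignWeight, latF_comm]
  exact ⟨hw.1, hw.2.1, fun lam h => (hw.2.2 lam h).symm⟩

lemma IsSignWeight.eqOn {w w' : ℝ → ℝ} (hw : IsSignWeight α β ℒ₁ ℒ₂ w)
    (hw' : IsSignWeight α β ℒ₁ ℒ₂ w') : ∀ lam ∈ latF α β, w' lam = w lam := by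
  have hsq (L : ℕ) (a b : ℝ) : (-1 : ℝ) ^ L * a * ((-1) ^ L * b) = a * b := by
    rw [mul_mul_mul_comm, ← mul_pow, neg_one_mul, neg_neg, one_pow, one_mul]
  have hprod : ∀ lam ∈ latF α β, w' lam * w lam = 1 :=
    latF_induction (by rw [hw.2.1, hw'.2.1, one_mul])
      (fun lam h => by rw [(hw'.2.2 lam h).1, (hw.2.2 lam h).1, hsq])
      (fun lam h => by rw [(hw'.2.2 lam h).2, (hw.2.2 lam h).2, hsq])
  intro lam h
  have := hprod lam h
  rcases hw.1 lam h with h1 | h1 <;> rw [h1] at this ⊢ <;> linarith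

end Lattice

lemma mem_latF_iff_of_eq_mul {m n : ℕ} (hmn : Nat.Coprime m n) {α β γ : ℝ} (hα : α = n * γ)
    (hβ : β = -(m * γ)) (lam : ℝ) : lam ∈ latF α β ↔ ∃ k : ℤ, lam = k * γ := by
  have hcomb (x y : ℤ) : x * α + y * β = ((x * n - y * m : ℤ) : ℝ) * γ := by
    rw [hα, hβ]; push_cast; ring
  obtain ⟨u, v, huv⟩ := Nat.isCoprime_iff_coprime.2 hmn
  refine ⟨fun ⟨x, y, h⟩ => ⟨_, h.trans (hcomb x y)⟩, fun ⟨k, h⟩ => ⟨k * v, -(k * u), ?_⟩⟩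
  rw [hcomb, h]
  congr 2
  linear_combination -k * huv

lemma exists_isSignWeight_of_eq_mul {α β : ℝ} {ℒ₁ ℒ₂ : ℝ → ℕ} {m n : ℕ} (hmn : Nat.Coprime m n)
    {γ : ℝ} (hγ : 0 < γ) (hα : α = n * γ) (hβ : β = -(m * γ)) (hconf : Config α β ℒ₁ ℒ₂) :
    ∃ w, IsSignWeight α β ℒ₁ ℒ₂ w := by
  have hF := mem_latF_iff_of_eq_mul hmn hα hβ
  have hsupp1 (e : ℝ) (he : ℒ₁ e ≠ 0) : ∃ j : ℤ, e = j * γ + α / 2 := by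
    obtain ⟨x, y, rfl⟩ := hconf.supp1 e he
    obtain ⟨k, hk⟩ := (hF _).1 ⟨x, y, rfl⟩
    exact ⟨k, by rw [hk]⟩
  have hsupp2 (e : ℝ) (he : ℒ₂ e ≠ 0) : ∃ j : ℤ, e = j * γ + β / 2 := by
    obtain ⟨x, y, rfl⟩ := hconf.supp2 e he
    obtain ⟨k, hk⟩ := (hF _).1 ⟨x, y, rfl⟩
    exact ⟨k, by rw [hk]⟩
  have hcons (r : ℤ) : ℒ₁ ((r - m : ℤ) * γ + α / 2) + ℒ₂ ((r + n : ℤ) * γ + β / 2) =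
      ℒ₁ (r * γ + α / 2) + ℒ₂ (r * γ + β / 2) := by
    obtain ⟨x, y, hxy⟩ := (hF (r * γ)).2 ⟨r, rfl⟩
    have := hconf.conserv (r * γ + (α + β) / 2) ⟨x, y, by rw [hxy]⟩
    convert this using 3 <;> (push_cast; rw [hα, hβ]; ring)
  have hA0 := eventually_lfun_intCast_mul_add_eq_zero hconf.fin1 hγ (α / 2)
  have hB0 := eventually_lfun_intCast_mul_add_eq_zero hconf.fin2 hγ (β / 2)
  have hflux := add_eq_add_of_conservation (a := fun j : ℤ => ℒ₁ (j * γ + α / 2))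
    (b := fun j : ℤ => ℒ₂ (j * γ + β / 2)) (lfun_intCast_mul_add hconf.fin1 hγ hsupp1)
    (lfun_intCast_mul_add hconf.fin2 hγ hsupp2) hcons hA0 hB0
  obtain ⟨W, hW⟩ := exists_parity_potential hmn.symm.add_pos hflux hA0 hB0
  set w : ℝ → ℝ := fun x => (-1) ^ (W ⌊x / γ⌋ + W 0)
  have hw (k : ℤ) : w (k * γ) = (-1) ^ (W k + W 0) := by
    simp [w, mul_div_cancel_right₀ _ hγ.ne']
  refine ⟨w, fun lam _ => neg_one_pow_eq_or ℝ _, ?_, fun lam h => ?_⟩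
  · simpa using (hw 0).trans (Even.neg_one_pow ⟨W 0, rfl⟩)
  obtain ⟨k, rfl⟩ := (hF lam).1 h
  have eα : k * γ + α = ((k + n : ℤ) : ℝ) * γ := by rw [hα]; push_cast; ring
  have eβ : k * γ + β = ((k - m : ℤ) : ℝ) * γ := by rw [hβ]; push_cast; ring
  rw [eα, eβ, hw, hw, hw, ← pow_add, ← pow_add]
  exact ⟨((hW k).1.add_right _).neg_one_pow.trans (by ring_nf),
    ((hW k).2.add_right _).neg_one_pow.trans (by ring_nf)⟩

lemma exists_isSignWeight {m n : ℕ} (hmn : Nat.Coprime m n) {α β : ℝ} (hαβ : (α, β) ≠ (0, 0))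
    (hlin : (m : ℝ) * α + n * β = 0) {ℒ₁ ℒ₂ : ℝ → ℕ} (hconf : Config α β ℒ₁ ℒ₂) :
    ∃ w, IsSignWeight α β ℒ₁ ℒ₂ w := by
  have hmn0 : (0 : ℝ) < m + n := by exact_mod_cast hmn.add_pos
  rcases lt_trichotomy β α with h | rfl | h
  · exact exists_isSignWeight_of_eq_mul hmn (div_pos (sub_pos.2 h) hmn0)
      (by field_simp; linarith) (by field_simp; linarith) hconf
  · refine absurd ?_ hαβ
    have : (m + n : ℝ) * β = 0 := by linarith
    simp [(mul_eq_zero.1 this).resolve_left hmn0.ne']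
  · obtain ⟨w, hw⟩ := exists_isSignWeight_of_eq_mul hmn.symm (div_pos (sub_pos.2 h) hmn0)
      (by field_simp; linarith) (by field_simp; linarith) hconf.symm
    exact ⟨w, hw.symm⟩

/-- There is a unique function `w : F → {1,−1}` with `w(0) = 1`,
`w(λ+α) = (−1)^{l₁(λ+α/2)}·w(λ)` and `w(λ+β) = (−1)^{l₂(λ+β/2)}·w(λ)` for all `λ ∈ F`. -/
theorem stmt13 (m n : ℕ) (hmn : Nat.Coprime m n) (α β : ℝ)
    (hαβ : (α, β) ≠ ((0 : ℝ), (0 : ℝ))) (hlin : (m : ℝ) * α + (n : ℝ) * β = 0)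
    (ℒ₁ ℒ₂ : ℝ → ℕ) (hconf : Config α β ℒ₁ ℒ₂) :
    ∃ w : ℝ → ℝ,
      ((∀ lam ∈ latF α β, w lam = 1 ∨ w lam = -1) ∧ w 0 = 1 ∧
        (∀ lam ∈ latF α β,
          w (lam + α) = (-1 : ℝ) ^ lfun ℒ₁ (lam + α / 2) * w lam ∧
          w (lam + β) = (-1 : ℝ) ^ lfun ℒ₂ (lam + β / 2) * w lam)) ∧
      ∀ w' : ℝ → ℝ,
        ((∀ lam ∈ latF α β, w' lam = 1 ∨ w' lam = -1) ∧ w' 0 = 1 ∧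
          (∀ lam ∈ latF α β,
            w' (lam + α) = (-1 : ℝ) ^ lfun ℒ₁ (lam + α / 2) * w' lam ∧
            w' (lam + β) = (-1 : ℝ) ^ lfun ℒ₂ (lam + β / 2) * w' lam)) →
        ∀ lam ∈ latF α β, w' lam = w lam := by
  obtain ⟨w, hw⟩ := exists_isSignWeight hmn hαβ hlin hconf
  exact ⟨w, hw, fun w' hw' => hw.eqOn hw'⟩

end
end

section
/- Assume |ξ| = 1, and let w: F → {1,−1} be the unique function with w(0)=1 satisfying w(λ+α) = (−1)^{l₁(λ+α/2)}w(λ) and w(λ+β) = (−1)^{l₂(λ+β/2)}w(λ) for all λ ∈ F. For f,g ∈ Γ₀(L_ξ) set ⟨f,g⟩ = Σ_{λ∈F} w(λ)·f(x_λ,y_λ)·conj(g(x_λ,y_λ)), where for each λ ∈ F, (x_λ,y_λ) ∈ ℤ² is any pair with x_λα+y_λβ = λ. Then: (i) each summand is independent of the choice of (x_λ,y_λ) and only finitely many summands are nonzero, so ⟨·,·⟩ is well defined; (ii) ⟨·,·⟩ is linear in the first argument and satisfies ⟨f,g⟩ = conj(⟨g,f⟩); (iii) ⟨·,·⟩ is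 non-degenerate on Γ₀(L_ξ); (iv) ⟨·,·⟩ is invariant: ⟨X̃ᵢ^± f, g⟩ = ⟨f, X̃ᵢ^∓ g⟩ for i = 1,2 and ⟨H̃f, g⟩ = ⟨f, H̃g⟩ for all f,g ∈ Γ₀(L_ξ). -/
open Complex

noncomputable section
open scoped Classical

/-!
Because `(m, n)` is primitive, the kernel of `(x, y) ↦ xα + yβ` on `ℤ²` is `ℤ (m, n)`. For
`f, g ∈ Γ(L_ξ)` and `|ξ| = 1` the product `f · conj g` is invariant under translation by `(m, n)`,
so it descends to `F`: the summands do not depend on the representatives, and the support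
condition defining `Γ₀(L_ξ)` leaves only finitely many of them nonzero.

Pairing `f` against its restriction to the fibre over `λ` isolates the single term
`w(λ) |f(x_λ, y_λ)|²`, which gives non-degeneracy. For the invariance under `X̃ᵢ^±`, reindex the
sum by `λ ↦ λ ∓ αᵢ`: the sign in `conj qᵢ = (-1)^{lᵢ} qᵢ` is exactly the sign relating `w` at the
two ends of the edge.
-/

open ComplexConjugate

def latProj (α β : ℝ) : ℤ × ℤ →+ ℝ where
  toFun p := p.1 * α + p.2 * β
  map_zero' := by simp
  map_add' p q := by simp only [Prod.fst_add, Prod.snd_add]; push_cast; ring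

lemma latProj_apply (α β : ℝ) (p : ℤ × ℤ) : latProj α β p = p.1 * α + p.2 * β := rfl

lemma coe_range_latProj (α β : ℝ) : ((latProj α β).range : Set ℝ) = latF α β := by
  ext u
  simp [latF, latProj_apply, eq_comm]

lemma latProj_mem_latF (α β : ℝ) (p : ℤ × ℤ) : latProj α β p ∈ latF α β := by
  rw [← coe_range_latProj]; exact ⟨p, rfl⟩

lemma bijOn_sub_latF {α β c : ℝ} (hc : c ∈ latF α β) :
    Set.BijOn (· - c) (latF α β) (latF α β) := by
  rw [← coe_range_latProj] at *
  exact ⟨fun _ hu => sub_mem hu hc, fun _ _ _ _ h => sub_left_injective h,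
    fun v hv => ⟨v + c, add_mem hv hc, add_sub_cancel_right v c⟩⟩

lemma exists_eq_zsmul_of_latProj_eq_zero {m n : ℤ} (hmn : IsCoprime m n) {α β : ℝ}
    (hαβ : (α, β) ≠ (0, 0)) (hlin : latProj α β (m, n) = 0) {p : ℤ × ℤ}
    (hp : latProj α β p = 0) : ∃ k : ℤ, p = k • (m, n) := by
  obtain ⟨x, y⟩ := p
  rw [latProj_apply] at hlin hp
  have hcross : x * n = y * m := by
    by_contra hne
    have hd : ((x * n - y * m : ℤ) : ℝ) ≠ 0 := by exact_mod_cast sub_ne_zero.mpr hne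
    refine hαβ (Prod.ext ?_ ?_)
    · refine (mul_eq_zero.mp ?_).resolve_left hd
      push_cast; linear_combination n * hp - y * hlin
    · refine (mul_eq_zero.mp ?_).resolve_left hd
      push_cast; linear_combination x * hlin - m * hp
  obtain ⟨a, b, hab⟩ := hmn
  refine ⟨a * x + b * y, Prod.ext ?_ ?_⟩
  · simp only [Prod.smul_mk, smul_eq_mul]
    linear_combination -x * hab + b * hcross
  · simp only [Prod.smul_mk, smul_eq_mul]
    linear_combination -y * hab - a * hcross

namespace GammaSet

variable {m n : ℤ} {ξ : ℂ} {f g : ℤ × ℤ → ℂ}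

lemma apply_sub_zsmul (hξ : ξ ≠ 0) (hf : f ∈ GammaSet m n ξ) (k : ℤ) (p : ℤ × ℤ) :
    f (p - k • (m, n)) = ξ ^ k * f p := by
  have hstep (q : ℤ × ℤ) : f (q - (m, n)) = ξ * f q := hf q.1 q.2
  induction k using Int.induction_on with
  | zero => simp
  | succ k ih => rw [add_smul, one_smul, ← sub_sub, hstep, ih, zpow_add_one₀ hξ]; ring
  | pred k ih =>
    have h := hstep (p - (-(k : ℤ) - 1) • (m, n))
    rw [show p - (-(k : ℤ) - 1) • (m, n) - (m, n) = p - (-(k : ℤ)) • (m, n) by module, ih] at h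
    rw [zpow_sub_one₀ hξ]
    field_simp
    linear_combination -h

lemma mul_conj_apply_sub_zsmul (hξ : ‖ξ‖ = 1) (hf : f ∈ GammaSet m n ξ)
    (hg : g ∈ GammaSet m n ξ) (k : ℤ) (p q : ℤ × ℤ) :
    f (p - k • (m, n)) * conj (g (q - k • (m, n))) = f p * conj (g q) := by
  have hξ0 : ξ ≠ 0 := norm_ne_zero_iff.mp (by simp [hξ])
  have hunit : ξ ^ k * conj ξ ^ k = 1 := by
    rw [← mul_zpow, mul_conj, normSq_eq_norm_sq, hξ]; norm_num
  rw [apply_sub_zsmul hξ0 hf, apply_sub_zsmul hξ0 hg, map_mul, map_zpow₀]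
  linear_combination f p * conj (g q) * hunit

end GammaSet

lemma mul_conj_eq_of_latProj_eq {m n : ℤ} (hmn : IsCoprime m n) {α β : ℝ}
    (hαβ : (α, β) ≠ (0, 0)) (hlin : latProj α β (m, n) = 0) {ξ : ℂ} (hξ : ‖ξ‖ = 1)
    {f g : ℤ × ℤ → ℂ} (hf : f ∈ GammaSet m n ξ) (hg : g ∈ GammaSet m n ξ) {p p' : ℤ × ℤ}
    (hpp' : latProj α β p = latProj α β p') (d : ℤ × ℤ) :
    f p * conj (g (p + d)) = f p' * conj (g (p' + d)) := by
  obtain ⟨k, hk⟩ := exists_eq_zsmul_of_latProj_eq_zero hmn hαβ hlin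
    (p := p - p') (by rw [map_sub, hpp', sub_self])
  obtain rfl : p' = p - k • (m, n) := by rw [← hk]; abel
  rw [show p - k • (m, n) + d = p + d - k • (m, n) by abel,
    GammaSet.mul_conj_apply_sub_zsmul hξ hf hg]

lemma conj_finsum_mem {ι : Type*} (s : Set ι) (f : ι → ℂ) :
    conj (∑ᶠ i ∈ s, f i) = ∑ᶠ i ∈ s, conj (f i) := by
  -- `conj` is an additive equivalence, so no finiteness of the support is needed
  change starRingAut _ = _
  simp only [AddEquivClass.map_finsum]
  rfl

def pairingTerm (w : ℝ → ℝ) (rep : ℝ → ℤ × ℤ) (f g : ℤ × ℤ → ℂ) (lam : ℝ) : ℂ :=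
  (w lam : ℂ) * f (rep lam) * conj (g (rep lam))

def pairing (α β : ℝ) (w : ℝ → ℝ) (rep : ℝ → ℤ × ℤ) (f g : ℤ × ℤ → ℂ) : ℂ :=
  ∑ᶠ lam ∈ latF α β, pairingTerm w rep f g lam

section Pairing

variable {α β : ℝ} {w : ℝ → ℝ} {rep : ℝ → ℤ × ℤ} {f f' g : ℤ × ℤ → ℂ}

lemma finite_inter_support_pairingTerm {m n : ℤ} {ξ : ℂ} (hlin : latProj α β (m, n) = 0)
    (hrep : ∀ lam ∈ latF α β, latProj α β (rep lam) = lam) (hf : f ∈ Gamma0Set m n ξ)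
    (g : ℤ × ℤ → ℂ) : (latF α β ∩ Function.support (pairingTerm w rep f g)).Finite := by
  obtain ⟨S, hS⟩ := hf.2
  refine (S.finite_toSet.image (latProj α β)).subset ?_
  rintro lam ⟨hlam, hterm⟩
  obtain ⟨q, hqS, k, hk⟩ := hS (rep lam) fun h0 => hterm (by simp [pairingTerm, h0])
  refine ⟨q, hqS, ?_⟩
  rw [← hrep lam hlam, hk, latProj_apply, latProj_apply]
  rw [latProj_apply] at hlin
  push_cast
  linear_combination -(k : ℝ) * hlin

lemma pairing_smul_add (c : ℂ) (hf : (latF α β ∩ Function.support (pairingTerm w rep f g)).Finite)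
    (hf' : (latF α β ∩ Function.support (pairingTerm w rep f' g)).Finite) :
    pairing α β w rep (c • f + f') g = c * pairing α β w rep f g + pairing α β w rep f' g := by
  have hterm : pairingTerm w rep (c • f + f') g =
      fun lam => c * pairingTerm w rep f g lam + pairingTerm w rep f' g lam := by
    ext lam
    simp only [pairingTerm, Pi.add_apply, Pi.smul_apply, smul_eq_mul]
    ring
  have hcf : (latF α β ∩ Function.support (fun lam => c * pairingTerm w rep f g lam)).Finite :=
    hf.subset (Set.inter_subset_inter_right _ (Function.support_mul_subset_right _ _))
  rw [pairing, hterm, finsum_mem_add_distrib' hcf hf', ← mul_finsum_mem]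
  rfl

lemma pairing_eq_conj_pairing (f g : ℤ × ℤ → ℂ) :
    pairing α β w rep f g = conj (pairing α β w rep g f) := by
  rw [pairing, pairing, conj_finsum_mem]
  refine finsum_mem_congr rfl fun lam _ => ?_
  simp only [pairingTerm, map_mul, conj_ofReal, conj_conj]
  ring

lemma pairing_indicator_fiber (hrep : ∀ lam ∈ latF α β, latProj α β (rep lam) = lam) {u : ℝ}
    (hu : u ∈ latF α β) :
    pairing α β w rep f ({q | latProj α β q = u}.indicator g) = pairingTerm w rep f g u := by
  have hsupp :
      latF α β ∩ Function.support (pairingTerm w rep f ({q | latProj α β q = u}.indicator g)) =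
        {u} ∩ Function.support (pairingTerm w rep f ({q | latProj α β q = u}.indicator g)) := by
    ext lam
    simp only [Set.mem_inter_iff, Set.mem_singleton_iff]
    refine ⟨fun ⟨hlam, hne⟩ => ⟨?_, hne⟩, fun ⟨rfl, hne⟩ => ⟨hu, hne⟩⟩
    by_contra hne'
    refine hne ?_
    simp [pairingTerm, Set.indicator, hrep lam hlam, hne']
  rw [pairing, finsum_mem_inter_support_eq _ _ _ hsupp, finsum_mem_singleton]
  simp [pairingTerm, Set.indicator, hrep u hu]

lemma pairing_opH (hrep : ∀ lam ∈ latF α β, latProj α β (rep lam) = lam) (f g : ℤ × ℤ → ℂ) :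
    pairing α β w rep (opH α β f) g = pairing α β w rep f (opH α β g) := by
  refine finsum_mem_congr rfl fun lam hlam => ?_
  have hlam' : ((rep lam).1 * α + (rep lam).2 * β : ℝ) = lam := hrep lam hlam
  simp only [pairingTerm, opH, hlam', map_mul, conj_ofReal]
  ring

end Pairing

section Nondegenerate

variable {m n : ℤ} {ξ : ℂ} {α β : ℝ} {w : ℝ → ℝ} {rep : ℝ → ℤ × ℤ} {f g : ℤ × ℤ → ℂ}

lemma indicator_fiber_mem_Gamma0Set (hlin : latProj α β (m, n) = 0) (hg : g ∈ Gamma0Set m n ξ)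
    (u : ℝ) : {q | latProj α β q = u}.indicator g ∈ Gamma0Set m n ξ := by
  refine ⟨fun x y => ?_, ?_⟩
  · have hfiber : latProj α β (x - m, y - n) = latProj α β (x, y) := by
      rw [← Prod.mk_sub_mk, map_sub, hlin, sub_zero]
    simp only [Set.indicator_apply, Set.mem_ofPred_eq, hfiber]
    split_ifs
    · exact hg.1 x y
    · rw [mul_zero]
  · obtain ⟨S, hS⟩ := hg.2
    exact ⟨S, fun p hp => hS p fun h0 => hp (by simp [Set.indicator_apply, h0])⟩

lemma eq_zero_of_forall_pairing_eq_zero (hmn : IsCoprime m n) (hαβ : (α, β) ≠ (0, 0))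
    (hlin : latProj α β (m, n) = 0) (hξ : ‖ξ‖ = 1)
    (hrep : ∀ lam ∈ latF α β, latProj α β (rep lam) = lam) (hw : ∀ lam ∈ latF α β, w lam ≠ 0)
    (hf : f ∈ Gamma0Set m n ξ) (h : ∀ g ∈ Gamma0Set m n ξ, pairing α β w rep f g = 0) :
    f = 0 := by
  funext p
  have hu : latProj α β p ∈ latF α β := latProj_mem_latF α β p
  have hterm := h _ (indicator_fiber_mem_Gamma0Set hlin hf (latProj α β p))
  rw [pairing_indicator_fiber hrep hu, pairingTerm, mul_assoc] at hterm
  have hrep_p : f (rep (latProj α β p)) * conj (f (rep (latProj α β p))) = f p * conj (f p) := by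
    simpa using mul_conj_eq_of_latProj_eq hmn hαβ hlin hξ hf.1 hf.1 (hrep _ hu) 0
  have hnormSq : f p * conj (f p) = 0 := by
    rw [← hrep_p]
    exact (mul_eq_zero.mp hterm).resolve_left (by exact_mod_cast hw _ hu)
  simpa [mul_conj] using hnormSq

end Nondegenerate

def shiftOp (Q : ℝ → ℂ) (α β : ℝ) (e : ℤ × ℤ) (s : ℤ) (f : ℤ × ℤ → ℂ) : ℤ × ℤ → ℂ :=
  fun p => Q (latProj α β p - s * (latProj α β e / 2)) * f (p - s • e)

lemma opX1_eq_shiftOp (Q : ℝ → ℂ) (α β : ℝ) (s : ℤ) : opX1 Q α β s = shiftOp Q α β (1, 0) s := by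
  funext f ⟨x, y⟩
  simp [opX1, shiftOp, latProj_apply]

lemma opX2_eq_shiftOp (Q : ℝ → ℂ) (α β : ℝ) (s : ℤ) : opX2 Q α β s = shiftOp Q α β (0, 1) s := by
  funext f ⟨x, y⟩
  simp [opX2, shiftOp, latProj_apply]

lemma ofReal_mul_qfun_eq_mul_conj (ℒ : ℝ → ℕ) {a b v : ℝ} (h : a = (-1) ^ lfun ℒ v * b) :
    (a : ℂ) * qfun ℒ v = b * conj (qfun ℒ v) := by
  rw [h, qfun, map_mul, map_pow, conj_I, conj_ofReal, neg_pow]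
  push_cast
  ring

section Shift

variable {α β : ℝ} {w : ℝ → ℝ} {Q : ℝ → ℂ} {γ : ℝ}

lemma ofReal_weight_mul_eq_mul_conj (hγ : γ ∈ latF α β)
    (hQ : ∀ lam ∈ latF α β, (w (lam + γ) : ℂ) * Q (lam + γ / 2) = w lam * conj (Q (lam + γ / 2)))
    {s : ℤ} (hs : s = 1 ∨ s = -1) {lam : ℝ} (hlam : lam ∈ latF α β) :
    (w lam : ℂ) * Q (lam - s * (γ / 2)) = w (lam - s * γ) * conj (Q (lam - s * (γ / 2))) := by
  rcases hs with rfl | rfl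
  · have h := hQ (lam - γ) ((bijOn_sub_latF hγ).mapsTo hlam)
    rw [sub_add_cancel, show lam - γ + γ / 2 = lam - γ / 2 by ring] at h
    simpa using h
  · have h := congrArg conj (hQ lam hlam)
    simp only [map_mul, conj_ofReal, conj_conj] at h
    simpa using h.symm

lemma pairing_shiftOp {m n : ℤ} (hmn : IsCoprime m n) (hαβ : (α, β) ≠ (0, 0))
    (hlin : latProj α β (m, n) = 0) {ξ : ℂ} (hξ : ‖ξ‖ = 1) {rep : ℝ → ℤ × ℤ}
    (hrep : ∀ lam ∈ latF α β, latProj α β (rep lam) = lam) (e : ℤ × ℤ)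
    (hQ : ∀ lam ∈ latF α β, (w (lam + latProj α β e) : ℂ) * Q (lam + latProj α β e / 2) =
      w lam * conj (Q (lam + latProj α β e / 2)))
    {s : ℤ} (hs : s = 1 ∨ s = -1) {f g : ℤ × ℤ → ℂ} (hf : f ∈ GammaSet m n ξ)
    (hg : g ∈ GammaSet m n ξ) :
    pairing α β w rep (shiftOp Q α β e s f) g = pairing α β w rep f (shiftOp Q α β e (-s) g) := by
  have hshift : latProj α β (s • e) = s * latProj α β e := by rw [map_zsmul, zsmul_eq_mul]
  have hsγ : s * latProj α β e ∈ latF α β := hshift ▸ latProj_mem_latF α β (s • e)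
  refine finsum_mem_eq_of_bijOn _ (bijOn_sub_latF hsγ) fun lam hlam => ?_
  have hμ := hrep _ ((bijOn_sub_latF hsγ).mapsTo hlam)
  have hfg := mul_conj_eq_of_latProj_eq hmn hαβ hlin hξ hf hg
    (p := rep lam - s • e) (p' := rep (lam - s * latProj α β e))
    (by rw [map_sub, hshift, hrep lam hlam, hμ]) (s • e)
  rw [sub_add_cancel] at hfg
  simp only [pairingTerm, shiftOp, hrep lam hlam, hμ, neg_smul, sub_neg_eq_add, map_mul]
  rw [show lam - s * latProj α β e - (-s : ℤ) * (latProj α β e / 2) =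
    lam - s * (latProj α β e / 2) by push_cast; ring]
  linear_combination f (rep lam - s • e) * conj (g (rep lam)) *
      ofReal_weight_mul_eq_mul_conj (latProj_mem_latF α β e) hQ hs hlam +
    (w (lam - s * latProj α β e) : ℂ) * conj (Q (lam - s * (latProj α β e / 2))) * hfg

end Shift

theorem stmt14_general (m n : ℕ) (hmn : Nat.Coprime m n) (α β : ℝ)
    (hαβ : (α, β) ≠ ((0 : ℝ), (0 : ℝ))) (hlin : (m : ℝ) * α + (n : ℝ) * β = 0)
    (ℒ₁ ℒ₂ : ℝ → ℕ)
    (ξ : ℂ) (hξ : ‖ξ‖ = 1)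
    (w : ℝ → ℝ) (hwpm : ∀ lam ∈ latF α β, w lam = 1 ∨ w lam = -1)
    (hwrec : ∀ lam ∈ latF α β,
      w (lam + α) = (-1 : ℝ) ^ lfun ℒ₁ (lam + α / 2) * w lam ∧
      w (lam + β) = (-1 : ℝ) ^ lfun ℒ₂ (lam + β / 2) * w lam)
    (rep : ℝ → ℤ × ℤ)
    (hrep : ∀ lam ∈ latF α β, ((rep lam).1 : ℝ) * α + ((rep lam).2 : ℝ) * β = lam)
    (B : (ℤ × ℤ → ℂ) → (ℤ × ℤ → ℂ) → ℂ)
    (hB : ∀ f g : ℤ × ℤ → ℂ,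
      B f g = ∑ᶠ lam ∈ latF α β,
        ((w lam : ℝ) : ℂ) * f (rep lam) * (starRingEnd ℂ) (g (rep lam))) :
    -- (i) well-definedness
    (∀ f ∈ Gamma0Set (m : ℤ) (n : ℤ) ξ, ∀ g ∈ Gamma0Set (m : ℤ) (n : ℤ) ξ,
      (∀ lam ∈ latF α β, ∀ p p' : ℤ × ℤ,
        (p.1 : ℝ) * α + (p.2 : ℝ) * β = lam → (p'.1 : ℝ) * α + (p'.2 : ℝ) * β = lam →
        f p * (starRingEnd ℂ) (g p) = f p' * (starRingEnd ℂ) (g p')) ∧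
      {lam ∈ latF α β |
        ((w lam : ℝ) : ℂ) * f (rep lam) * (starRingEnd ℂ) (g (rep lam)) ≠ 0}.Finite) ∧
    -- (ii) sesquilinearity and Hermitian symmetry
    (∀ c : ℂ, ∀ f f' g : ℤ × ℤ → ℂ,
      f ∈ Gamma0Set (m : ℤ) (n : ℤ) ξ → f' ∈ Gamma0Set (m : ℤ) (n : ℤ) ξ →
      g ∈ Gamma0Set (m : ℤ) (n : ℤ) ξ →
      B (c • f + f') g = c * B f g + B f' g) ∧
    (∀ f ∈ Gamma0Set (m : ℤ) (n : ℤ) ξ, ∀ g ∈ Gamma0Set (m : ℤ) (n : ℤ) ξ,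
      B f g = (starRingEnd ℂ) (B g f)) ∧
    -- (iii) non-degeneracy
    (∀ f ∈ Gamma0Set (m : ℤ) (n : ℤ) ξ,
      (∀ g ∈ Gamma0Set (m : ℤ) (n : ℤ) ξ, B f g = 0) → f = 0) ∧
    -- (iv) invariance
    (∀ f ∈ Gamma0Set (m : ℤ) (n : ℤ) ξ, ∀ g ∈ Gamma0Set (m : ℤ) (n : ℤ) ξ,
      (∀ s : ℤ, s = 1 ∨ s = -1 →
        B (opX1 (qfun ℒ₁) α β s f) g = B f (opX1 (qfun ℒ₁) α β (-s) g) ∧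
        B (opX2 (qfun ℒ₂) α β s f) g = B f (opX2 (qfun ℒ₂) α β (-s) g)) ∧
      B (opH α β f) g = B f (opH α β g)) := by
  have hmn' : IsCoprime (m : ℤ) n := Nat.isCoprime_iff_coprime.mpr hmn
  have hlin' : latProj α β (m, n) = 0 := by simpa [latProj_apply] using hlin
  have hw : ∀ lam ∈ latF α β, w lam ≠ 0 := fun lam hlam => by
    rcases hwpm lam hlam with h | h <;> simp [h]
  obtain rfl : B = pairing α β w rep := funext₂ hB
  have hfin (f) (hf : f ∈ Gamma0Set (m : ℤ) n ξ) (g) :=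
    finite_inter_support_pairingTerm (w := w) hlin' hrep hf g
  refine ⟨fun f hf g hg => ⟨fun lam _ p p' hp hp' => ?_, hfin f hf g⟩,
    fun c f f' g hf hf' _ => pairing_smul_add c (hfin f hf g) (hfin f' hf' g),
    fun f _ g _ => pairing_eq_conj_pairing f g,
    fun f hf h => eq_zero_of_forall_pairing_eq_zero hmn' hαβ hlin' hξ hrep hw hf h,
    fun f hf g hg => ⟨fun s hs => ⟨?_, ?_⟩, pairing_opH hrep f g⟩⟩
  · simpa using mul_conj_eq_of_latProj_eq hmn' hαβ hlin' hξ hf.1 hg.1 (hp.trans hp'.symm) 0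
  · rw [opX1_eq_shiftOp, opX1_eq_shiftOp]
    refine pairing_shiftOp hmn' hαβ hlin' hξ hrep (1, 0) (fun lam hlam => ?_) hs hf.1 hg.1
    simpa [latProj_apply] using ofReal_mul_qfun_eq_mul_conj ℒ₁ (hwrec lam hlam).1
  · rw [opX2_eq_shiftOp, opX2_eq_shiftOp]
    refine pairing_shiftOp hmn' hαβ hlin' hξ hrep (0, 1) (fun lam hlam => ?_) hs hf.1 hg.1
    simpa [latProj_apply] using ofReal_mul_qfun_eq_mul_conj ℒ₂ (hwrec lam hlam).2

/-- Assume `|ξ| = 1` and let `w` be the sign function on `F` and `rep` a choice of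
representatives `(x_λ, y_λ)` for `λ ∈ F`. Then the sesquilinear form
`⟨f,g⟩ = Σ_{λ∈F} w(λ) f(x_λ,y_λ) conj(g(x_λ,y_λ))` on `Γ₀(L_ξ)` is well defined
(summands independent of choices, finitely many nonzero terms), linear in the first
argument, Hermitian-symmetric, non-degenerate, and `∗`-invariant. -/
theorem stmt14 (m n : ℕ) (hmn : Nat.Coprime m n) (α β : ℝ)
    (hαβ : (α, β) ≠ ((0 : ℝ), (0 : ℝ))) (hlin : (m : ℝ) * α + (n : ℝ) * β = 0)
    (ℒ₁ ℒ₂ : ℝ → ℕ) (hconf : Config α β ℒ₁ ℒ₂)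
    (ξ : ℂ) (hξ : ‖ξ‖ = 1)
    (w : ℝ → ℝ) (hwpm : ∀ lam ∈ latF α β, w lam = 1 ∨ w lam = -1) (hw0 : w 0 = 1)
    (hwrec : ∀ lam ∈ latF α β,
      w (lam + α) = (-1 : ℝ) ^ lfun ℒ₁ (lam + α / 2) * w lam ∧
      w (lam + β) = (-1 : ℝ) ^ lfun ℒ₂ (lam + β / 2) * w lam)
    (rep : ℝ → ℤ × ℤ)
    (hrep : ∀ lam ∈ latF α β, ((rep lam).1 : ℝ) * α + ((rep lam).2 : ℝ) * β = lam)
    (B : (ℤ × ℤ → ℂ) → (ℤ × ℤ → ℂ) → ℂ)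
    (hB : ∀ f g : ℤ × ℤ → ℂ,
      B f g = ∑ᶠ lam ∈ latF α β,
        ((w lam : ℝ) : ℂ) * f (rep lam) * (starRingEnd ℂ) (g (rep lam))) :
    -- (i) well-definedness
    (∀ f ∈ Gamma0Set (m : ℤ) (n : ℤ) ξ, ∀ g ∈ Gamma0Set (m : ℤ) (n : ℤ) ξ,
      (∀ lam ∈ latF α β, ∀ p p' : ℤ × ℤ,
        (p.1 : ℝ) * α + (p.2 : ℝ) * β = lam → (p'.1 : ℝ) * α + (p'.2 : ℝ) * β = lam →
        f p * (starRingEnd ℂ) (g p) = f p' * (starRingEnd ℂ) (g p')) ∧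
      {lam ∈ latF α β |
        ((w lam : ℝ) : ℂ) * f (rep lam) * (starRingEnd ℂ) (g (rep lam)) ≠ 0}.Finite) ∧
    -- (ii) sesquilinearity and Hermitian symmetry
    (∀ c : ℂ, ∀ f f' g : ℤ × ℤ → ℂ,
      f ∈ Gamma0Set (m : ℤ) (n : ℤ) ξ → f' ∈ Gamma0Set (m : ℤ) (n : ℤ) ξ →
      g ∈ Gamma0Set (m : ℤ) (n : ℤ) ξ →
      B (c • f + f') g = c * B f g + B f' g) ∧
    (∀ f ∈ Gamma0Set (m : ℤ) (n : ℤ) ξ, ∀ g ∈ Gamma0Set (m : ℤ) (n : ℤ) ξ,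
      B f g = (starRingEnd ℂ) (B g f)) ∧
    -- (iii) non-degeneracy
    (∀ f ∈ Gamma0Set (m : ℤ) (n : ℤ) ξ,
      (∀ g ∈ Gamma0Set (m : ℤ) (n : ℤ) ξ, B f g = 0) → f = 0) ∧
    -- (iv) invariance
    (∀ f ∈ Gamma0Set (m : ℤ) (n : ℤ) ξ, ∀ g ∈ Gamma0Set (m : ℤ) (n : ℤ) ξ,
      (∀ s : ℤ, s = 1 ∨ s = -1 →
        B (opX1 (qfun ℒ₁) α β s f) g = B f (opX1 (qfun ℒ₁) α β (-s) g) ∧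
        B (opX2 (qfun ℒ₂) α β s f) g = B f (opX2 (qfun ℒ₂) α β (-s) g)) ∧
      B (opH α β f) g = B f (opH α β g)) :=
  stmt14_general m n hmn α β hαβ hlin ℒ₁ ℒ₂ ξ hξ w hwpm hwrec rep hrep B hB
end
end

section
/- For every λ ∈ F and every sequence ⟨i₁,…,i_ℓ⟩ ∈ Seq₂(m,n) (with ℓ = m+n), one has Σ_{j: i_j=1} 𝓛₁(λ+σ_j+α/2) = Σ_{j: i_j=2} 𝓛₂(λ+σ_j+β/2); equivalently, Σ_{j=1}^{ℓ} 𝓛_{i_j}(λ+σ_j+α_{i_j}/2) = 2·ord(𝐢,λ). -/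
open Complex

noncomputable section
open scoped Classical

/-- The step `α₁ = α` (for `i = 0`, i.e. a `1`-step) or `α₂ = β` (for `i = 1`). -/
def stepOf (α β : ℝ) (i : Fin 2) : ℝ := if i = 0 then α else β

/-- `σ_j = α_{i₁} + ⋯ + α_{i_{j-1}}`, the partial sum of the first `j` steps. -/
def sigmaL (α β : ℝ) (l : List (Fin 2)) (j : ℕ) : ℝ :=
  ((l.take j).map (stepOf α β)).sum

/-- `ord(𝐢,λ) = Σ_{j : i_j = 1} 𝓛₁(λ + σ_j + α/2)`. -/
def ordL (α β : ℝ) (ℒ₁ : ℝ → ℕ) (l : List (Fin 2)) (lam : ℝ) : ℕ :=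
  ∑ j ∈ Finset.range l.length,
    if l.getD j 0 = 0 then ℒ₁ (lam + sigmaL α β l j + α / 2) else 0

/-! The weights of `Config α β ℒ₁ ℒ₂` along a lattice path form a flux through the path, and current
conservation says exactly that this flux does not change when two consecutive steps of the path are
swapped. Since `mα + nβ = 0`, the path `𝐢` is closed, so moving its first step to the end turns the
flux at `λ` into the flux at `λ + α_{i₁}`; together with swaps this makes the flux invariant under
translation by `α` and by `β`. Along the line `λ + ℤγ` for a nonzero `γ ∈ {α, β}` the flux is
therefore constant, while finite support of `𝓛` makes it vanish far out: it is `0`, which is the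
balance `Σ_{i_j = 1} 𝓛₁ = Σ_{i_j = 2} 𝓛₂`. -/

section PathSum

variable {ι G M : Type*} [AddCommMonoid G] [AddCommMonoid M] (s : ι → G) (w : ι → G → M)

def pathSum : List ι → G → M
  | [], _ => 0
  | i :: t, x => w i x + pathSum t (x + s i)

@[simp]
lemma pathSum_nil (x : G) : pathSum s w [] x = 0 := rfl

@[simp]
lemma pathSum_cons (i : ι) (t : List ι) (x : G) :
    pathSum s w (i :: t) x = w i x + pathSum s w t (x + s i) := rfl

lemma pathSum_append (l₁ l₂ : List ι) (x : G) :
    pathSum s w (l₁ ++ l₂) x = pathSum s w l₁ x + pathSum s w l₂ (x + (l₁.map s).sum) := by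
  induction l₁ generalizing x with
  | nil => simp
  | cons i t ih => simp [ih, add_assoc]

lemma pathSum_eq_sum_range (d : ι) (l : List ι) (x : G) :
    pathSum s w l x =
      ∑ j ∈ Finset.range l.length, w (l.getD j d) (x + ((l.take j).map s).sum) := by
  induction l generalizing x with
  | nil => simp
  | cons i t ih =>
    rw [List.length_cons, Finset.sum_range_succ', pathSum_cons, ih, add_comm]
    simp [add_assoc]

variable {s w} {S : Set G}

lemma pathSum_perm (hS : ∀ x ∈ S, ∀ i, x + s i ∈ S)
    (hw : ∀ x ∈ S, ∀ a b, w a x + w b (x + s a) = w b x + w a (x + s b))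
    {l₁ l₂ : List ι} (h : l₁.Perm l₂) : ∀ x ∈ S, pathSum s w l₁ x = pathSum s w l₂ x := by
  induction h with
  | nil => simp
  | cons i _ ih => intro x hx; simp [ih _ (hS x hx i)]
  | swap a b t =>
    intro x hx
    simp only [pathSum_cons, ← add_assoc, hw x hx b a, add_right_comm x (s a) (s b)]
  | trans _ _ ih₁ ih₂ => intro x hx; rw [ih₁ x hx, ih₂ x hx]

/-- Compare the rotations `i :: l` and `l ++ [i]` of the closed path. -/
lemma pathSum_add_step [IsLeftCancelAdd M] (hS : ∀ x ∈ S, ∀ i, x + s i ∈ S)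
    (hw : ∀ x ∈ S, ∀ a b, w a x + w b (x + s a) = w b x + w a (x + s b))
    {l : List ι} (hl : (l.map s).sum = 0) (i : ι) {x : G} (hx : x ∈ S) :
    pathSum s w l (x + s i) = pathSum s w l x := by
  have h := pathSum_perm hS hw (List.perm_append_singleton i l) x hx
  rw [pathSum_append, hl, add_zero, pathSum_cons, pathSum_nil, add_zero, add_comm] at h
  exact add_left_cancel h.symm

end PathSum

lemma support_finite_pathSum_line {ι G M : Type*} [AddCommGroup G] [AddCommMonoid M]
    {s : ι → G} {w : ι → G → M} {γ : G}
    (hw : ∀ i x, (Function.support fun k : ℤ => w i (x + k • γ)).Finite) (l : List ι) (x : G) :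
    (Function.support fun k : ℤ => pathSum s w l (x + k • γ)).Finite := by
  induction l generalizing x with
  | nil => simp
  | cons i t ih =>
    simp only [pathSum_cons, add_right_comm x _ (s i)]
    exact ((hw i x).union (ih (x + s i))).subset (Function.support_add _ _)

lemma support_finite_comp_line {G N : Type*} [AddCommGroup G] [Module.IsTorsionFree ℤ G] [Zero N]
    {f : G → N} (hf : (Function.support f).Finite) {γ : G} (hγ : γ ≠ 0) (x : G) :
    (Function.support fun k : ℤ => f (x + k • γ)).Finite :=
  hf.preimage ((add_right_injective x).comp (smul_left_injective ℤ hγ)).injOn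

lemma eq_zero_of_add_one_of_support_finite {M : Type*} [Zero M] {h : ℤ → M}
    (hper : ∀ k, h (k + 1) = h k) (hfin : (Function.support h).Finite) : h 0 = 0 := by
  have hconst : ∀ k, h k = h 0 := fun k => by simpa using (Function.Periodic.zsmul hper k) 0
  by_contra h0
  refine Set.infinite_univ (hfin.subset fun k _ => ?_)
  rw [Function.mem_support, hconst k]
  exact h0

lemma sum_ite_fin_two {κ N : Type*} [AddCommMonoid N] (t : Finset κ) (g : κ → Fin 2)
    (a b : κ → N) :
    ∑ j ∈ t, (if g j = 0 then a j else b j) =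
      ∑ j ∈ t, (if g j = 0 then a j else 0) + ∑ j ∈ t, (if g j = 1 then b j else 0) := by
  rw [← Finset.sum_add_distrib]
  refine Finset.sum_congr rfl fun j _ => ?_
  generalize g j = i
  fin_cases i <;> simp

lemma sum_map_stepOf (α β : ℝ) (l : List (Fin 2)) :
    (l.map (stepOf α β)).sum = l.count 0 * α + l.count 1 * β := by
  induction l with
  | nil => simp
  | cons i t ih =>
    rw [List.map_cons, List.sum_cons, ih]
    fin_cases i <;> simp [stepOf] <;> ring

lemma add_intCast_mul_stepOf_mem_latF {α β x : ℝ} (hx : x ∈ latF α β) (k : ℤ) (i : Fin 2) :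
    x + k * stepOf α β i ∈ latF α β := by
  obtain ⟨p, q, rfl⟩ := hx
  fin_cases i
  · exact ⟨p + k, q, by simp [stepOf]; ring⟩
  · exact ⟨p, q + k, by simp [stepOf]; ring⟩

lemma pathSum_stepOf_eq_sum_range {M : Type*} [AddCommMonoid M] (α β : ℝ)
    (w : Fin 2 → ℝ → M) (l : List (Fin 2)) (x : ℝ) :
    pathSum (stepOf α β) w l x =
      ∑ j ∈ Finset.range l.length, w (l.getD j 0) (x + sigmaL α β l j) :=
  pathSum_eq_sum_range _ _ 0 l x

/-- The signed flux of a configuration through the edge leaving `x` in direction `i`. -/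
def fluxWeight (α β : ℝ) (ℒ₁ ℒ₂ : ℝ → ℕ) (i : Fin 2) (x : ℝ) : ℤ :=
  if i = 0 then ℒ₁ (x + α / 2) else -ℒ₂ (x + β / 2)

namespace Config

variable {α β : ℝ} {ℒ₁ ℒ₂ : ℝ → ℕ}

lemma fluxWeight_swap (hconf : Config α β ℒ₁ ℒ₂) {x : ℝ} (hx : x ∈ latF α β) (a b : Fin 2) :
    fluxWeight α β ℒ₁ ℒ₂ a x + fluxWeight α β ℒ₁ ℒ₂ b (x + stepOf α β a) =
      fluxWeight α β ℒ₁ ℒ₂ b x + fluxWeight α β ℒ₁ ℒ₂ a (x + stepOf α β b) := by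
  obtain ⟨p, q, hpq⟩ := hx
  have hconserv : ℒ₁ (x + β + α / 2) + ℒ₂ (x + α + β / 2) = ℒ₁ (x + α / 2) + ℒ₂ (x + β / 2) := by
    convert hconf.conserv (x + (α + β) / 2) ⟨p, q, by rw [hpq]⟩ using 3 <;> ring
  fin_cases a <;> fin_cases b <;> simp [fluxWeight, stepOf] <;> omega

lemma support_finite_fluxWeight_line (hconf : Config α β ℒ₁ ℒ₂) {γ : ℝ} (hγ : γ ≠ 0)
    (i : Fin 2) (x : ℝ) :
    (Function.support fun k : ℤ => fluxWeight α β ℒ₁ ℒ₂ i (x + k • γ)).Finite := by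
  fin_cases i
  · refine (support_finite_comp_line hconf.fin1 hγ (x + α / 2)).subset fun k hk => ?_
    simpa [fluxWeight, add_right_comm] using hk
  · refine (support_finite_comp_line hconf.fin2 hγ (x + β / 2)).subset fun k hk => ?_
    simpa [fluxWeight, add_right_comm] using hk

lemma pathSum_fluxWeight_eq_zero (hconf : Config α β ℒ₁ ℒ₂) (hαβ : (α, β) ≠ (0, 0))
    {l : List (Fin 2)} (hl : (l.map (stepOf α β)).sum = 0) {lam : ℝ} (hlam : lam ∈ latF α β) :
    pathSum (stepOf α β) (fluxWeight α β ℒ₁ ℒ₂) l lam = 0 := by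
  obtain ⟨i, hi⟩ : ∃ i, stepOf α β i ≠ 0 := by
    by_contra! h
    exact hαβ (Prod.ext (h 0) (h 1))
  have hmem : ∀ k : ℤ, lam + k • stepOf α β i ∈ latF α β := fun k => by
    simpa using add_intCast_mul_stepOf_mem_latF hlam k i
  have hS : ∀ x ∈ latF α β, ∀ j, x + stepOf α β j ∈ latF α β := fun x hx j => by
    simpa using add_intCast_mul_stepOf_mem_latF hx 1 j
  have hline := support_finite_pathSum_line (s := stepOf α β)
    (hconf.support_finite_fluxWeight_line hi) l lam
  have hstep (k : ℤ) :
      pathSum (stepOf α β) (fluxWeight α β ℒ₁ ℒ₂) l (lam + (k + 1) • stepOf α β i) =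
        pathSum (stepOf α β) (fluxWeight α β ℒ₁ ℒ₂) l (lam + k • stepOf α β i) := by
    rw [add_smul, one_smul, ← add_assoc]
    exact pathSum_add_step hS (fun x hx => hconf.fluxWeight_swap hx) hl i (hmem k)
  simpa using eq_zero_of_add_one_of_support_finite hstep hline

end Config

theorem stmt15_general (m n : ℕ) (α β : ℝ)
    (hαβ : (α, β) ≠ ((0 : ℝ), (0 : ℝ))) (hlin : (m : ℝ) * α + (n : ℝ) * β = 0)
    (ℒ₁ ℒ₂ : ℝ → ℕ) (hconf : Config α β ℒ₁ ℒ₂)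
    (l : List (Fin 2)) (hl0 : l.count 0 = m) (hl1 : l.count 1 = n) :
    ∀ lam ∈ latF α β,
      ((∑ j ∈ Finset.range l.length,
          if l.getD j 0 = 0 then ℒ₁ (lam + sigmaL α β l j + α / 2) else 0) =
        ∑ j ∈ Finset.range l.length,
          if l.getD j 0 = 1 then ℒ₂ (lam + sigmaL α β l j + β / 2) else 0) ∧
      ((∑ j ∈ Finset.range l.length,
          if l.getD j 0 = 0 then ℒ₁ (lam + sigmaL α β l j + α / 2)
          else ℒ₂ (lam + sigmaL α β l j + β / 2)) =
        2 * ordL α β ℒ₁ l lam) := by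
  intro lam hlam
  have hclosed : (l.map (stepOf α β)).sum = 0 := by rw [sum_map_stepOf, hl0, hl1, hlin]
  have hflux := hconf.pathSum_fluxWeight_eq_zero hαβ hclosed hlam
  simp only [pathSum_stepOf_eq_sum_range, fluxWeight] at hflux
  rw [sum_ite_fin_two, add_eq_zero_iff_eq_neg, ← Finset.sum_neg_distrib] at hflux
  simp only [apply_ite Neg.neg, neg_neg, neg_zero] at hflux
  norm_cast at hflux
  exact ⟨hflux, by rw [sum_ite_fin_two, ← hflux, two_mul, ordL]⟩

/-- For every `λ ∈ F` and every sequence `𝐢 ∈ Seq₂(m,n)`: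
`Σ_{j : i_j = 1} 𝓛₁(λ+σ_j+α/2) = Σ_{j : i_j = 2} 𝓛₂(λ+σ_j+β/2)`; equivalently
`Σ_j 𝓛_{i_j}(λ+σ_j+α_{i_j}/2) = 2·ord(𝐢,λ)`. -/
theorem stmt15 (m n : ℕ) (hmn : Nat.Coprime m n) (α β : ℝ)
    (hαβ : (α, β) ≠ ((0 : ℝ), (0 : ℝ))) (hlin : (m : ℝ) * α + (n : ℝ) * β = 0)
    (ℒ₁ ℒ₂ : ℝ → ℕ) (hconf : Config α β ℒ₁ ℒ₂)
    (l : List (Fin 2)) (hl0 : l.count 0 = m) (hl1 : l.count 1 = n) :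
    ∀ lam ∈ latF α β,
      ((∑ j ∈ Finset.range l.length,
          if l.getD j 0 = 0 then ℒ₁ (lam + sigmaL α β l j + α / 2) else 0) =
        ∑ j ∈ Finset.range l.length,
          if l.getD j 0 = 1 then ℒ₂ (lam + sigmaL α β l j + β / 2) else 0) ∧
      ((∑ j ∈ Finset.range l.length,
          if l.getD j 0 = 0 then ℒ₁ (lam + sigmaL α β l j + α / 2)
          else ℒ₂ (lam + sigmaL α β l j + β / 2)) =
        2 * ordL α β ℒ₁ l lam) :=
  stmt15_general m n α β hαβ hlin ℒ₁ ℒ₂ hconf l hl0 hl1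
end
end
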